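/- arXiv:1410.1920 — 15 statements merged into one kernel-verified Lean document; each statement's English description precedes it below -/
import Mathlib

section
/- Fix prior probabilities D0, D1 ∈ (0,1) with D0 + D1 = 1, a privacy parameter v > 0, and α ∈ (0, 1/2]. Then there exists a threshold R > 0 such that for all coupon valuations ρ0, ρ1 > 0 with ρ0 + ρ1 ≥ R and min{ρ0, ρ1} ≥ α·(ρ0 + ρ1), the privacy-aware utility u attains a unique maximum over the domain D, and this maximizer has the form (p*, p*) with 1/2 ≤ p* < 1 (i.e., the privacy-aware agent plays a nondegenerate Randomized Response strategy). -/
/-- The strategy domain `D = ((0,1)×(0,1)) ∪ {(1,0),(0,1)}`. -/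
def strategyDomain : Set (ℝ × ℝ) :=
  (Set.Ioo (0:ℝ) 1 ×ˢ Set.Ioo (0:ℝ) 1) ∪ {((1:ℝ), (0:ℝ)), ((0:ℝ), (1:ℝ))}

/-- `X(p,q) = max{p/(1−q), (1−q)/p, q/(1−p), (1−p)/q}` (with the Lean convention
`0/0 = 0`, each ratio with zero denominator at the corner points also has zero
numerator, and `X = 1` there). -/
noncomputable def Xgame (p q : ℝ) : ℝ :=
  max (max (p / (1 - q)) ((1 - q) / p)) (max (q / (1 - p)) ((1 - p) / q))

/-- The privacy-aware utility `u(p,q) = D0·ρ0·p + D1·ρ1·q − v·ln(X(p,q))`. -/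
noncomputable def uPriv (D0 D1 ρ0 ρ1 v p q : ℝ) : ℝ :=
  D0 * ρ0 * p + D1 * ρ1 * q - v * Real.log (Xgame p q)

/-!
Write `a = D0·ρ0`, `b = D1·ρ1`. On the diagonal `u(t,t) = (a+b)t − v·ln(t/(1−t))` for `t ≥ 1/2`,
which increases up to the root `p*` of `(a+b)·p(1−p) = v` and decreases after it. Off the
diagonal, with `x = X(p,q)` and `t = x/(1+x)`, the constraints `p ≤ x(1−q)`, `q ≤ x(1−p)` bound
`ap + bq` by the value of this linear form at a vertex `(1,0)`, `(0,1)` or `(t,t)` of the region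
they cut out, while `ln x = ln(t/(1−t))`; so `u(p,q)` is below a corner value or below `u(t,t)`,
with equality only at `(t,t)`. The corners are worth `a` and `b`, and once `min a b` beats
`v + v·ln((a+b)/v)`, which is the case for large `ρ0 + ρ1` since `min a b` grows linearly in it,
`u(p*,p*)` exceeds both.
-/

open Real Set

lemma Xgame_one_zero : Xgame 1 0 = 1 := by norm_num [Xgame]

lemma Xgame_zero_one : Xgame 0 1 = 1 := by norm_num [Xgame]

lemma one_le_Xgame {p q : ℝ} (hp : 0 < p) (hq : q < 1) : 1 ≤ Xgame p q := by
  refine le_trans ?_ (le_max_left _ _)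
  rcases le_total (1 - q) p with h | h
  · exact le_max_of_le_left ((one_le_div (by linarith)).2 h)
  · exact le_max_of_le_right ((one_le_div hp).2 h)

lemma fst_le_Xgame_mul {p q : ℝ} (hq : q < 1) : p ≤ Xgame p q * (1 - q) :=
  (div_le_iff₀ (by linarith)).1 ((le_max_left _ _).trans (le_max_left _ _))

lemma snd_le_Xgame_mul {p q : ℝ} (hp : p < 1) : q ≤ Xgame p q * (1 - p) :=
  (div_le_iff₀ (by linarith)).1 ((le_max_left _ _).trans (le_max_right _ _))

lemma log_Xgame_self {t : ℝ} (ht : 1 / 2 ≤ t) (ht1 : t < 1) :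
    log (Xgame t t) = log t - log (1 - t) := by
  have hle : (1 - t) / t ≤ t / (1 - t) := by
    rw [div_le_div_iff₀ (by linarith) (by linarith)]
    nlinarith
  rw [Xgame, max_self, max_eq_left hle, log_div (by linarith) (by linarith)]

section LinearBound

variable {a b p q x : ℝ}

lemma mul_add_mul_le_max (ha : 0 ≤ a) (hb : 0 ≤ b) (hp : p ≤ 1) (hq : q ≤ 1)
    (hpx : p ≤ x * (1 - q)) (hqx : q ≤ x * (1 - p)) (h : b * x ≤ a ∨ a * x ≤ b) :
    a * p + b * q ≤ max a b := by
  rcases h with h | h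
  · nlinarith [le_max_left a b, mul_le_mul_of_nonneg_left hqx hb]
  · nlinarith [le_max_right a b, mul_le_mul_of_nonneg_left hpx ha]

/-- Both summands on the left are nonnegative when `a < b x`, `b < a x`, `p ≤ x(1−q)` and
`q ≤ x(1−p)`. -/
lemma vertex_identity :
    (b * x - a) * (x - p - x * q) + (a * x - b) * (x - x * p - q) =
      (x - 1) * ((a + b) * x - (1 + x) * (a * p + b * q)) := by
  ring

lemma one_lt_of_lt_mul (ha : 0 < a) (hb : 0 < b) (hax : a < b * x) (hbx : b < a * x) :
    1 < x := by
  nlinarith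

lemma mul_add_mul_le_of_lt_mul (ha : 0 < a) (hb : 0 < b) (hax : a < b * x) (hbx : b < a * x)
    (hpx : p ≤ x * (1 - q)) (hqx : q ≤ x * (1 - p)) :
    (1 + x) * (a * p + b * q) ≤ (a + b) * x := by
  have hsum : 0 ≤ (x - 1) * ((a + b) * x - (1 + x) * (a * p + b * q)) :=
    vertex_identity ▸ add_nonneg (mul_nonneg (by linarith) (by linarith))
      (mul_nonneg (by linarith) (by linarith))
  have := (mul_nonneg_iff_of_pos_left (sub_pos.2 (one_lt_of_lt_mul ha hb hax hbx))).1 hsum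
  linarith

lemma eq_div_one_add_of_mul_add_mul_eq (ha : 0 < a) (hb : 0 < b) (hax : a < b * x)
    (hbx : b < a * x) (hpx : p ≤ x * (1 - q)) (hqx : q ≤ x * (1 - p))
    (h : (1 + x) * (a * p + b * q) = (a + b) * x) :
    p = x / (1 + x) ∧ q = x / (1 + x) := by
  have hx := one_lt_of_lt_mul ha hb hax hbx
  have hzero : (b * x - a) * (x - p - x * q) + (a * x - b) * (x - x * p - q) = 0 := by
    rw [vertex_identity, h, sub_self, mul_zero]
  have h1 : x - p - x * q = 0 := by nlinarith
  have h2 : x - x * p - q = 0 := by nlinarith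
  have hpq : p = q := by
    have : (x - 1) * (p - q) = 0 := by linear_combination h1 - h2
    linarith [(mul_eq_zero.1 this).resolve_left (by linarith)]
  subst hpq
  constructor <;> rw [eq_div_iff (by linarith)] <;> linarith

end LinearBound

/-- `u(t, t)` for `t ≥ 1/2`, where `c = D0·ρ0 + D1·ρ1`. -/
noncomputable def rrUtility (c v t : ℝ) : ℝ := c * t - v * (log t - log (1 - t))

lemma uPriv_self (D0 D1 ρ0 ρ1 v : ℝ) {t : ℝ} (ht : 1 / 2 ≤ t) (ht1 : t < 1) :
    uPriv D0 D1 ρ0 ρ1 v t t = rrUtility (D0 * ρ0 + D1 * ρ1) v t := by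
  rw [uPriv, log_Xgame_self ht ht1, rrUtility]
  ring

lemma hasDerivAt_rrUtility (c v : ℝ) {t : ℝ} (ht : 0 < t) (ht1 : t < 1) :
    HasDerivAt (rrUtility c v) (c - v / (t * (1 - t))) t := by
  have hlog1 : HasDerivAt (fun s => log (1 - s)) (-1 / (1 - t)) t :=
    ((hasDerivAt_id' t).const_sub 1).log (by linarith)
  have h : HasDerivAt (fun s => c * s - v * (log s - log (1 - s)))
      (c * 1 - v * (t⁻¹ - -1 / (1 - t))) t :=
    ((hasDerivAt_id' t).const_mul c).sub (((hasDerivAt_log ht.ne').sub hlog1).const_mul v)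
  refine h.congr_deriv ?_
  field_simp [show 1 - t ≠ 0 by linarith]
  ring

section Monotonicity

variable {c v ps : ℝ}

/-- The sign of the derivative `c − v/(t(1−t))` is that of `t(1−t) − ps(1−ps)`, and `t ↦ t(1−t)`
decreases on `[1/2, 1)`. -/
lemma strictMonoOn_rrUtility (hc : 0 < c) (hps : c * (ps * (1 - ps)) = v) (hps1 : ps < 1) :
    StrictMonoOn (rrUtility c v) (Icc (1 / 2) ps) := by
  refine strictMonoOn_of_deriv_pos (convex_Icc _ _) (fun t ht => ?_) (fun t ht => ?_)
  · exact (hasDerivAt_rrUtility c v (by linarith [ht.1]) (by linarith [ht.2])).continuousAt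
      |>.continuousWithinAt
  · rw [interior_Icc] at ht
    obtain ⟨ht0, htps⟩ := ht
    rw [(hasDerivAt_rrUtility c v (by linarith) (by linarith)).deriv, sub_pos,
      div_lt_iff₀ (by nlinarith), ← hps]
    nlinarith [mul_pos hc (mul_pos (sub_pos.2 htps) (show 0 < t + ps - 1 by linarith))]

lemma strictAntiOn_rrUtility (hc : 0 < c) (hps : c * (ps * (1 - ps)) = v) (hps2 : 1 / 2 ≤ ps) :
    StrictAntiOn (rrUtility c v) (Ico ps 1) := by
  refine strictAntiOn_of_deriv_neg (convex_Ico _ _) (fun t ht => ?_) (fun t ht => ?_)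
  · exact (hasDerivAt_rrUtility c v (by linarith [ht.1]) ht.2).continuousAt.continuousWithinAt
  · rw [interior_Ico] at ht
    obtain ⟨hpst, ht1⟩ := ht
    rw [(hasDerivAt_rrUtility c v (by linarith) ht1).deriv, sub_neg,
      lt_div_iff₀ (by nlinarith), ← hps]
    nlinarith [mul_pos hc (mul_pos (sub_pos.2 hpst) (show 0 < t + ps - 1 by linarith))]

lemma rrUtility_lt (hc : 0 < c) (hps : c * (ps * (1 - ps)) = v) (hps2 : 1 / 2 ≤ ps)
    (hps1 : ps < 1) {t : ℝ} (ht : t ∈ Ico (1 / 2) 1) (hne : t ≠ ps) :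
    rrUtility c v t < rrUtility c v ps := by
  rcases hne.lt_or_gt with h | h
  · exact strictMonoOn_rrUtility hc hps hps1 ⟨ht.1, h.le⟩ ⟨hps2, le_rfl⟩ h
  · exact strictAntiOn_rrUtility hc hps hps2 ⟨le_rfl, hps1⟩ ⟨h.le, ht.2⟩ h

lemma rrUtility_le (hc : 0 < c) (hps : c * (ps * (1 - ps)) = v) (hps2 : 1 / 2 ≤ ps)
    (hps1 : ps < 1) {t : ℝ} (ht : t ∈ Ico (1 / 2) 1) :
    rrUtility c v t ≤ rrUtility c v ps := by
  rcases eq_or_ne t ps with rfl | hne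
  · exact le_rfl
  · exact (rrUtility_lt hc hps hps2 hps1 ht hne).le

end Monotonicity

lemma exists_mul_one_sub_eq {c v : ℝ} (hv : 0 < v) (hc : 4 * v ≤ c) :
    ∃ ps, 1 / 2 ≤ ps ∧ ps < 1 ∧ c * (ps * (1 - ps)) = v := by
  have hc0 : 0 < c := by linarith
  have hw : 0 ≤ 1 - 4 * v / c := by rw [sub_nonneg, div_le_one hc0]; exact hc
  have hsqrt : √(1 - 4 * v / c) < 1 := by
    rw [sqrt_lt' one_pos, one_pow]
    linarith [div_pos (by linarith : 0 < 4 * v) hc0]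
  refine ⟨(1 + √(1 - 4 * v / c)) / 2, by linarith [sqrt_nonneg (1 - 4 * v / c)], by linarith, ?_⟩
  have hsq := sq_sqrt hw
  have : (1 + √(1 - 4 * v / c)) / 2 * (1 - (1 + √(1 - 4 * v / c)) / 2) = v / c := by
    linear_combination (-1 / 4) * hsq
  rw [this]
  field_simp

/-- Compare with the value at `t = 1 − v/(a+b)`, which is at least `a + b − v − v·ln((a+b)/v)`. -/
lemma max_lt_rrUtility {a b v ps : ℝ} (hv : 0 < v) (hab : 2 * v ≤ a + b)
    (hgap : v + v * log ((a + b) / v) < min a b) (hps : (a + b) * (ps * (1 - ps)) = v)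
    (hps2 : 1 / 2 ≤ ps) (hps1 : ps < 1) :
    max a b < rrUtility (a + b) v ps := by
  have hc : 0 < a + b := by linarith
  have hvc : 0 < v / (a + b) := div_pos hv hc
  have hvc2 : v / (a + b) ≤ 1 / 2 := by rw [div_le_iff₀ hc]; linarith
  have hlog : log (1 - v / (a + b)) ≤ 0 := log_nonpos (by linarith) (by linarith)
  have hlog' : log (v / (a + b)) = - log ((a + b) / v) := by rw [← log_inv, inv_div]
  have hval : (a + b) * (1 - v / (a + b)) = a + b - v := by field_simp
  calc max a b = a + b - min a b := by linarith [min_add_max a b]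
    _ < rrUtility (a + b) v (1 - v / (a + b)) := by
      rw [rrUtility, hval, sub_sub_cancel, hlog']
      nlinarith
    _ ≤ rrUtility (a + b) v ps :=
      rrUtility_le hc hps hps2 hps1 ⟨by linarith, by linarith⟩

lemma lt_rrUtility_of_mem_Ioo {a b v ps p q : ℝ} (ha : 0 < a) (hb : 0 < b) (hv : 0 < v)
    (hps : (a + b) * (ps * (1 - ps)) = v) (hps2 : 1 / 2 ≤ ps) (hps1 : ps < 1)
    (hmax : max a b < rrUtility (a + b) v ps) (hp : p ∈ Ioo 0 1) (hq : q ∈ Ioo 0 1)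
    (hne : (p, q) ≠ (ps, ps)) :
    a * p + b * q - v * log (Xgame p q) < rrUtility (a + b) v ps := by
  set x := Xgame p q
  have hx : 1 ≤ x := one_le_Xgame hp.1 hq.2
  have hpx : p ≤ x * (1 - q) := fst_le_Xgame_mul hq.2
  have hqx : q ≤ x * (1 - p) := snd_le_Xgame_mul hp.2
  by_cases hvertex : a < b * x ∧ b < a * x
  · obtain ⟨hax, hbx⟩ := hvertex
    have hx1 : 0 < 1 + x := by linarith
    have ht : x / (1 + x) ∈ Ico (1 / 2) 1 :=
      ⟨by rw [le_div_iff₀ hx1]; linarith, by rw [div_lt_one hx1]; linarith⟩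
    have hlogx : log x = log (x / (1 + x)) - log (1 - x / (1 + x)) := by
      rw [← log_div (by positivity) (by linarith [ht.2])]
      congr 1
      field_simp
      ring
    have hlin := mul_add_mul_le_of_lt_mul ha hb hax hbx hpx hqx
    rcases hlin.lt_or_eq with hlt | heq
    · calc a * p + b * q - v * log x < rrUtility (a + b) v (x / (1 + x)) := by
            rw [rrUtility, ← hlogx, mul_div_assoc', lt_sub_iff_add_lt, sub_add_cancel,
              lt_div_iff₀ hx1]
            linarith
        _ ≤ rrUtility (a + b) v ps := rrUtility_le (by linarith) hps hps2 hps1 ht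
    · obtain ⟨hpt, hqt⟩ := eq_div_one_add_of_mul_add_mul_eq ha hb hax hbx hpx hqx heq
      have htps : x / (1 + x) ≠ ps := fun h => hne (by rw [hpt, hqt, h])
      calc a * p + b * q - v * log x = rrUtility (a + b) v (x / (1 + x)) := by
            rw [rrUtility, ← hlogx, hpt, hqt]
            ring
        _ < rrUtility (a + b) v ps := rrUtility_lt (by linarith) hps hps2 hps1 ht htps
  · have hcorner : b * x ≤ a ∨ a * x ≤ b := by
      rwa [not_and_or, not_lt, not_lt] at hvertex
    have := mul_add_mul_le_max ha.le hb.le hp.2.le hq.2.le hpx hqx hcorner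
    have := mul_nonneg hv.le (log_nonneg hx)
    linarith

lemma uPriv_lt_of_mem_strategyDomain {D0 D1 ρ0 ρ1 v ps : ℝ} (ha : 0 < D0 * ρ0)
    (hb : 0 < D1 * ρ1) (hv : 0 < v) (hps : (D0 * ρ0 + D1 * ρ1) * (ps * (1 - ps)) = v)
    (hps2 : 1 / 2 ≤ ps) (hps1 : ps < 1)
    (hmax : max (D0 * ρ0) (D1 * ρ1) < rrUtility (D0 * ρ0 + D1 * ρ1) v ps) :
    ∀ s ∈ strategyDomain, s ≠ (ps, ps) →
      uPriv D0 D1 ρ0 ρ1 v s.1 s.2 < uPriv D0 D1 ρ0 ρ1 v ps ps := by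
  rintro s (⟨hp, hq⟩ | hs) hne <;> rw [uPriv_self D0 D1 ρ0 ρ1 v hps2 hps1]
  · exact lt_rrUtility_of_mem_Ioo ha hb hv hps hps2 hps1 hmax hp hq hne
  · rcases hs with rfl | rfl
    · simp only [uPriv, Xgame_one_zero, log_one]
      linarith [le_max_left (D0 * ρ0) (D1 * ρ1)]
    · simp only [uPriv, Xgame_zero_one, log_one]
      linarith [le_max_right (D0 * ρ0) (D1 * ρ1)]

/-- Tangent-line bound `ln y ≤ y − 1` at `y = βS/(2v)`. -/
lemma add_mul_log_div_lt {v β S : ℝ} (hv : 0 < v) (hβ : 0 < β) (hS : 0 < S)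
    (hSβ : 2 * v * (log (2 / β) + 1) / β ≤ S) :
    v + v * log (S / v) < β * S := by
  have hsplit : log (S / v) = log (β * S / (2 * v)) + log (2 / β) := by
    rw [← log_mul (by positivity) (by positivity)]
    congr 1
    field_simp
  have htangent : v * log (β * S / (2 * v)) ≤ β * S / 2 - v := by
    have h := log_le_sub_one_of_pos (by positivity : 0 < β * S / (2 * v))
    have e : v * (β * S / (2 * v)) = β * S / 2 := by field_simp
    nlinarith [mul_le_mul_of_nonneg_left h hv.le]
  rw [div_le_iff₀ hβ] at hSβ
  rw [hsplit, mul_add]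
  nlinarith

lemma add_mul_log_lt_min {a b v β S : ℝ} (hv : 0 < v) (hβ : 0 < β) (hS : 0 < S)
    (ha : β * S ≤ a) (hb : β * S ≤ b) (hab : a + b ≤ S)
    (hSβ : 2 * v * (log (2 / β) + 1) / β ≤ S) :
    v + v * log ((a + b) / v) < min a b := by
  have hlog := log_le_log (div_pos (by nlinarith) hv) (div_le_div_of_nonneg_right hab hv.le)
  nlinarith [le_min ha hb, add_mul_log_div_lt hv hβ hS hSβ]

theorem privacy_aware_plays_randomized_response_general
    (D0 D1 v α : ℝ)
    (hD0 : D0 ∈ Set.Ioo (0:ℝ) 1) (hD1 : D1 ∈ Set.Ioo (0:ℝ) 1)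
    (hv : 0 < v) (hα : α ∈ Set.Ioc (0:ℝ) (1/2)) :
    ∃ R : ℝ, 0 < R ∧ ∀ ρ0 ρ1 : ℝ, 0 < ρ0 → 0 < ρ1 → R ≤ ρ0 + ρ1 →
      α * (ρ0 + ρ1) ≤ min ρ0 ρ1 →
      ∃ p : ℝ, 1/2 ≤ p ∧ p < 1 ∧ (p, p) ∈ strategyDomain ∧
        (∀ s ∈ strategyDomain, uPriv D0 D1 ρ0 ρ1 v s.1 s.2 ≤ uPriv D0 D1 ρ0 ρ1 v p p) ∧
        (∀ s ∈ strategyDomain,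
          uPriv D0 D1 ρ0 ρ1 v s.1 s.2 = uPriv D0 D1 ρ0 ρ1 v p p → s = (p, p)) := by
  set β := α * min D0 D1
  have hm : 0 < min D0 D1 := lt_min hD0.1 hD1.1
  have hβ : 0 < β := mul_pos hα.1 hm
  have hlog : 0 ≤ log (2 / β) := log_nonneg <| (one_le_div hβ).2 <| by
    nlinarith [hα.2, min_le_left D0 D1, hD0.2]
  refine ⟨2 * v * (log (2 / β) + 1) / β, by positivity, fun ρ0 ρ1 hρ0 hρ1 hR hmin => ?_⟩
  have hS : 0 < ρ0 + ρ1 := by linarith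
  have ha : β * (ρ0 + ρ1) ≤ D0 * ρ0 := by
    nlinarith [min_le_left D0 D1, min_le_left ρ0 ρ1]
  have hb : β * (ρ0 + ρ1) ≤ D1 * ρ1 := by
    nlinarith [min_le_right D0 D1, min_le_right ρ0 ρ1]
  have hc : D0 * ρ0 + D1 * ρ1 ≤ ρ0 + ρ1 := by nlinarith [hD0.2, hD1.2]
  have hc4 : 4 * v ≤ D0 * ρ0 + D1 * ρ1 := by nlinarith [(div_le_iff₀ hβ).1 hR]
  obtain ⟨ps, hps2, hps1, hps⟩ := exists_mul_one_sub_eq hv hc4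
  have hmax := max_lt_rrUtility hv (by linarith) (add_mul_log_lt_min hv hβ hS ha hb hc hR)
    hps hps2 hps1
  have hlt := uPriv_lt_of_mem_strategyDomain (mul_pos hD0.1 hρ0) (mul_pos hD1.1 hρ1) hv hps
    hps2 hps1 hmax
  refine ⟨ps, hps2, hps1, Or.inl ⟨⟨by linarith, hps1⟩, ⟨by linarith, hps1⟩⟩,
    fun s hs => ?_, fun s hs heq => ?_⟩
  · rcases eq_or_ne s (ps, ps) with rfl | hne
    exacts [le_rfl, (hlt s hs hne).le]
  · by_contra hne
    exact (hlt s hs hne).ne heq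

/-- For large enough total coupon value, the privacy-aware agent's unique
utility-maximizing strategy over the domain is a nondegenerate Randomized
Response strategy `(p*, p*)` with `1/2 ≤ p* < 1`. -/
theorem privacy_aware_plays_randomized_response
    (D0 D1 v α : ℝ)
    (hD0 : D0 ∈ Set.Ioo (0:ℝ) 1) (hD1 : D1 ∈ Set.Ioo (0:ℝ) 1)
    (hsum : D0 + D1 = 1) (hv : 0 < v) (hα : α ∈ Set.Ioc (0:ℝ) (1/2)) :
    ∃ R : ℝ, 0 < R ∧ ∀ ρ0 ρ1 : ℝ, 0 < ρ0 → 0 < ρ1 → R ≤ ρ0 + ρ1 →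
      α * (ρ0 + ρ1) ≤ min ρ0 ρ1 →
      ∃ p : ℝ, 1/2 ≤ p ∧ p < 1 ∧ (p, p) ∈ strategyDomain ∧
        (∀ s ∈ strategyDomain, uPriv D0 D1 ρ0 ρ1 v s.1 s.2 ≤ uPriv D0 D1 ρ0 ρ1 v p p) ∧
        (∀ s ∈ strategyDomain,
          uPriv D0 D1 ρ0 ρ1 v s.1 s.2 = uPriv D0 D1 ρ0 ρ1 v p p → s = (p, p)) :=
  privacy_aware_plays_randomized_response_general D0 D1 v α hD0 hD1 hv hα
end

section
/- Let v > 0 and Y > 4v. The function φ(p) = Y·p − v·ln(p/(1−p)) on the interval [1/2, 1) attains a strict unique maximum at p* = (1 + √(1 − 4v/Y))/2; that is, p* ∈ [1/2,1) and φ(p) < φ(p*) for every p ∈ [1/2, 1) with p ≠ p*. -/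
/-!
On `(0, 1)` the derivative of `φ(p) = Y·p − v·ln(p/(1−p))` is `Y − v/(p(1−p))`. Since `p* (1 − p*) = v/Y`,
its numerator factors as `Y·(p − p*)(1 − p − p*)`, and `1 − p − p* < 0` for `p ≥ 1/2`; so `φ' > 0` left of
`p*` and `φ' < 0` right of it, and the mean value theorem turns this sign change into a strict maximum.
-/

open Real Set

theorem apply_lt_of_hasDerivAt_pos_of_neg {s : Set ℝ} (hs : s.OrdConnected) {f f' : ℝ → ℝ}
    {c : ℝ} (hc : c ∈ s) (hf : ∀ x ∈ s, HasDerivAt f (f' x) x)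
    (hpos : ∀ x ∈ s, x < c → 0 < f' x) (hneg : ∀ x ∈ s, c < x → f' x < 0)
    {x : ℝ} (hx : x ∈ s) (hxc : x ≠ c) : f x < f c := by
  have hderiv : ∀ {a b}, a ∈ s → b ∈ s → a < b →
      ∃ ξ ∈ Ioo a b, f' ξ = (f b - f a) / (b - a) := fun ha hb hab =>
    exists_hasDerivAt_eq_slope f f' hab
      (fun y hy => (hf y (hs.out ha hb hy)).continuousAt.continuousWithinAt)
      (fun y hy => hf y (hs.out ha hb (Ioo_subset_Icc_self hy)))
  rcases hxc.lt_or_gt with hlt | hgt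
  · obtain ⟨ξ, hξ, hslope⟩ := hderiv hx hc hlt
    have := hpos ξ (hs.out hx hc (Ioo_subset_Icc_self hξ)) hξ.2
    rw [hslope, lt_div_iff₀ (sub_pos.2 hlt)] at this
    linarith
  · obtain ⟨ξ, hξ, hslope⟩ := hderiv hc hx hgt
    have := hneg ξ (hs.out hc hx (Ioo_subset_Icc_self hξ)) hξ.1
    rw [hslope, div_lt_iff₀ (sub_pos.2 hgt)] at this
    linarith

theorem hasDerivAt_log_div_one_sub {x : ℝ} (hx₀ : 0 < x) (hx₁ : x < 1) :
    HasDerivAt (fun p => log (p / (1 - p))) (1 / (x * (1 - x))) x := by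
  have h1x : 1 - x ≠ 0 := (sub_pos.2 hx₁).ne'
  have hodds : HasDerivAt (fun p => p / (1 - p)) ((1 * (1 - x) - x * (-1)) / (1 - x) ^ 2) x :=
    (hasDerivAt_id x).div ((hasDerivAt_id x).const_sub 1) h1x
  convert hodds.log (div_ne_zero hx₀.ne' h1x) using 1
  field_simp
  ring

theorem half_add_sqrt_one_sub_mem_Ioo {t : ℝ} (ht₀ : 0 < t) (ht₁ : t < 1) :
    (1 + √(1 - t)) / 2 ∈ Ioo (1 / 2 : ℝ) 1 := by
  have hpos : 0 < √(1 - t) := sqrt_pos.2 (sub_pos.2 ht₁)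
  have hlt : √(1 - t) < 1 := (sqrt_lt' one_pos).2 (by linarith)
  constructor <;> linarith

theorem half_add_sqrt_one_sub_mul {t : ℝ} (ht₁ : t ≤ 1) :
    (1 + √(1 - t)) / 2 * (1 - (1 + √(1 - t)) / 2) = t / 4 := by
  have hsq := sq_sqrt (sub_nonneg.2 ht₁)
  linear_combination (-1 / 4 : ℝ) * hsq

/-- For `Y > 4v > 0`, the function `φ(p) = Y·p − v·ln(p/(1−p))` on `[1/2, 1)`
attains a strict unique maximum at `p* = (1 + √(1 − 4v/Y))/2`. -/
theorem symmetric_strategy_unique_max (v Y : ℝ) (hv : 0 < v) (hY : 4 * v < Y) :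
    (1 + Real.sqrt (1 - 4 * v / Y)) / 2 ∈ Set.Ico (1/2 : ℝ) 1 ∧
    ∀ p ∈ Set.Ico (1/2 : ℝ) 1, p ≠ (1 + Real.sqrt (1 - 4 * v / Y)) / 2 →
      Y * p - v * Real.log (p / (1 - p)) <
        Y * ((1 + Real.sqrt (1 - 4 * v / Y)) / 2) -
          v * Real.log (((1 + Real.sqrt (1 - 4 * v / Y)) / 2) /
            (1 - (1 + Real.sqrt (1 - 4 * v / Y)) / 2)) := by
  have hY₀ : 0 < Y := by linarith
  have ht₀ : 0 < 4 * v / Y := by positivity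
  have ht₁ : 4 * v / Y < 1 := (div_lt_one hY₀).2 hY
  set q := (1 + √(1 - 4 * v / Y)) / 2
  have hq : q ∈ Ioo (1 / 2 : ℝ) 1 := half_add_sqrt_one_sub_mem_Ioo ht₀ ht₁
  have hqv : v = Y * (q * (1 - q)) := by
    rw [half_add_sqrt_one_sub_mul ht₁.le]; field_simp
  have hderiv : ∀ x ∈ Ico (1 / 2 : ℝ) 1, HasDerivAt (fun p => Y * p - v * log (p / (1 - p)))
      (Y * (x - q) * (1 - x - q) / (x * (1 - x))) x := by
    intro x hx
    have hx₀ : 0 < x := by linarith [hx.1]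
    have hx₁ : 0 < 1 - x := sub_pos.2 hx.2
    refine (((hasDerivAt_id x).const_mul Y).sub
      ((hasDerivAt_log_div_one_sub hx₀ hx.2).const_mul v)).congr_deriv ?_
    rw [hqv]; field_simp; ring
  refine ⟨Ioo_subset_Ico_self hq, fun p hp hpq =>
    apply_lt_of_hasDerivAt_pos_of_neg ordConnected_Ico (Ioo_subset_Ico_self hq) hderiv
      (fun x hx hxq => ?_) (fun x hx hxq => ?_) hp hpq⟩
  all_goals
    have hx₀ : 0 < x := by linarith [hx.1]
    have hx₁ : 0 < 1 - x := sub_pos.2 hx.2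
    have hsum : 1 - x - q < 0 := by linarith [hx.1, hq.1]
  · exact div_pos (mul_pos_of_neg_of_neg (by nlinarith) hsum) (by positivity)
  · exact div_neg_of_neg_of_pos (mul_neg_of_pos_of_neg (by nlinarith) hsum) (by positivity)
end

section
/- Let g : ℝ → ℝ be twice differentiable with g''(x) > 0 and g(x) = g(1−x) for all x ∈ [0,1], and define h(z) := g(z) − (z − 1/2)·g'(z). If z1, z2 ∈ [0,1] satisfy z1 < z2 and h(z1) = h(z2), then z2 = 1 − z1 (and hence z1 < 1/2 < z2). -/
/-!
The payoff `h(z) = g(z) − (z − 1/2)·g'(z)` has derivative `(1/2 − z)·g''(z)`, so it increases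
strictly on `[0, 1/2]` and decreases strictly on `[1/2, 1]`; two distinct points with equal
payoff therefore lie on opposite sides of `1/2`. Differentiating `g(x) = g(1 − x)` gives
`g'(1 − x) = −g'(x)`, whence `h(1 − z) = h(z)`, and injectivity of `h` on `[1/2, 1]`
forces `z₂ = 1 − z₁`.
-/

open Set

section Payoff

variable {g g' g'' : ℝ → ℝ} {c : ℝ}

theorem hasDerivAt_sub_mul_deriv (hg' : ∀ x, HasDerivAt g (g' x) x)
    (hg'' : ∀ x, HasDerivAt g' (g'' x) x) (x : ℝ) :
    HasDerivAt (fun y => g y - (y - c) * g' y) ((c - x) * g'' x) x := by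
  have := (hg' x).sub (((hasDerivAt_id x).sub_const c).mul (hg'' x))
  exact this.congr_deriv (by simp only [id]; ring)

theorem strictMonoOn_sub_mul_deriv {a : ℝ} (hg' : ∀ x, HasDerivAt g (g' x) x)
    (hg'' : ∀ x, HasDerivAt g' (g'' x) x) (hpos : ∀ x ∈ Ioo a c, 0 < g'' x) :
    StrictMonoOn (fun y => g y - (y - c) * g' y) (Icc a c) := by
  have hder := hasDerivAt_sub_mul_deriv (c := c) hg' hg''
  refine strictMonoOn_of_deriv_pos (convex_Icc a c)
    (fun x _ => (hder x).continuousAt.continuousWithinAt) fun x hx => ?_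
  rw [interior_Icc] at hx
  rw [(hder x).deriv]
  exact mul_pos (sub_pos.2 hx.2) (hpos x hx)

theorem strictAntiOn_sub_mul_deriv {b : ℝ} (hg' : ∀ x, HasDerivAt g (g' x) x)
    (hg'' : ∀ x, HasDerivAt g' (g'' x) x) (hpos : ∀ x ∈ Ioo c b, 0 < g'' x) :
    StrictAntiOn (fun y => g y - (y - c) * g' y) (Icc c b) := by
  have hder := hasDerivAt_sub_mul_deriv (c := c) hg' hg''
  refine strictAntiOn_of_deriv_neg (convex_Icc c b)
    (fun x _ => (hder x).continuousAt.continuousWithinAt) fun x hx => ?_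
  rw [interior_Icc] at hx
  rw [(hder x).deriv]
  exact mul_neg_of_neg_of_pos (sub_neg.2 hx.1) (hpos x hx)

end Payoff

theorem deriv_reflect_eq_neg {g g' : ℝ → ℝ} {s : Set ℝ} {c x : ℝ}
    (hg' : ∀ y, HasDerivAt g (g' y) y) (hsym : ∀ y ∈ s, g y = g (c - y))
    (hs : UniqueDiffWithinAt ℝ s x) (hx : x ∈ s) : g' (c - x) = -g' x := by
  have hdiff : HasDerivAt (fun y => g y - g (c - y)) (g' x + g' (c - x)) x :=
    ((hg' x).sub ((hg' (c - x)).comp x ((hasDerivAt_id x).const_sub c))).congr_deriv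
      (by ring)
  have hzero : HasDerivWithinAt (fun y => g y - g (c - y)) 0 s x :=
    (hasDerivWithinAt_const x s 0).congr (fun y hy => sub_eq_zero.2 (hsym y hy))
      (sub_eq_zero.2 (hsym x hx))
  linarith [hs.eq_deriv s hdiff.hasDerivWithinAt hzero]

theorem lt_and_lt_of_eq_of_strictMonoOn_of_strictAntiOn {α β : Type*} [LinearOrder α]
    [Preorder β] {f : α → β} {a b c x y : α} (hmono : StrictMonoOn f (Icc a c))
    (hanti : StrictAntiOn f (Icc c b)) (hx : x ∈ Icc a b) (hy : y ∈ Icc a b) (hxy : x < y)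
    (hfeq : f x = f y) : x < c ∧ c < y := by
  constructor
  · by_contra! hcx
    exact (hanti ⟨hcx, hx.2⟩ ⟨hcx.trans hxy.le, hy.2⟩ hxy).ne' hfeq
  · by_contra! hyc
    exact (hmono ⟨hx.1, hxy.le.trans hyc⟩ ⟨hy.1, hyc⟩ hxy).ne hfeq

/-- For a symmetric strictly convex generator `g`, if the expected uniform payoff
`h(z) = g(z) − (z − 1/2)·g'(z)` agrees on `z1 < z2` in `[0,1]`, then `z2 = 1 − z1`
(and hence `z1 < 1/2 < z2`). -/
theorem symmetric_scoring_equal_values (g g' g'' : ℝ → ℝ)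
    (hg' : ∀ x : ℝ, HasDerivAt g (g' x) x)
    (hg'' : ∀ x : ℝ, HasDerivAt g' (g'' x) x)
    (hpos : ∀ x ∈ Set.Icc (0:ℝ) 1, 0 < g'' x)
    (hsym : ∀ x ∈ Set.Icc (0:ℝ) 1, g x = g (1 - x))
    (z1 z2 : ℝ) (hz1 : z1 ∈ Set.Icc (0:ℝ) 1) (hz2 : z2 ∈ Set.Icc (0:ℝ) 1)
    (hlt : z1 < z2)
    (heq : g z1 - (z1 - 1/2) * g' z1 = g z2 - (z2 - 1/2) * g' z2) :
    z2 = 1 - z1 ∧ z1 < 1/2 ∧ 1/2 < z2 := by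
  set h : ℝ → ℝ := fun y => g y - (y - 1/2) * g' y
  have hmono : StrictMonoOn h (Icc 0 (1/2)) :=
    strictMonoOn_sub_mul_deriv hg' hg'' fun x hx => hpos x ⟨hx.1.le, by linarith [hx.2]⟩
  have hanti : StrictAntiOn h (Icc (1/2) 1) :=
    strictAntiOn_sub_mul_deriv hg' hg'' fun x hx => hpos x ⟨by linarith [hx.1], hx.2.le⟩
  obtain ⟨hz1half, hz2half⟩ :=
    lt_and_lt_of_eq_of_strictMonoOn_of_strictAntiOn hmono hanti hz1 hz2 hlt heq
  have hrefl : h (1 - z1) = h z1 := by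
    have hg'refl := deriv_reflect_eq_neg hg' hsym (uniqueDiffOn_Icc zero_lt_one z1 hz1) hz1
    simp only [h]
    rw [← hsym z1 hz1, hg'refl]
    ring
  refine ⟨hanti.injOn ⟨hz2half.le, hz2.2⟩ ⟨by linarith, by linarith [hz1.1]⟩ ?_, hz1half, hz2half⟩
  exact heq.symm.trans hrefl.symm
end

section
/- Let g : ℝ → ℝ be twice differentiable with g''(x) > 0 and g(x) = g(1−x) for all x ∈ [0,1], and define h(z) := g(z) − (z − 1/2)·g'(z). If z, z' ∈ [0,1] with z' ≤ 1/2 and h(z) ≥ h(z'), then z' ≤ z ≤ 1 − z'. -/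
/-!
The expected payment `h` has derivative `h'(z) = -(z - 1/2) g''(z)`, so by strict convexity it
strictly increases on `[0, 1/2]` and strictly decreases on `[1/2, 1]`; symmetry of `g` makes `h`
symmetric about `1/2`. Hence `h(z) ≥ h(z')` with `z' ≤ 1/2` forces `z` into `[z', 1 - z']`.
-/

open Set

noncomputable def expectedPayment (g g' : ℝ → ℝ) (z : ℝ) : ℝ :=
  g z - (z - 1/2) * g' z

section

variable {g g' g'' : ℝ → ℝ}

lemma hasDerivAt_expectedPayment {x : ℝ} (hg' : HasDerivAt g (g' x) x)
    (hg'' : HasDerivAt g' (g'' x) x) :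
    HasDerivAt (expectedPayment g g') (-(x - 1/2) * g'' x) x :=
  (hg'.sub ((hasDerivAt_id' x).sub_const (1/2) |>.mul hg'')).congr_deriv (by ring)

lemma continuous_expectedPayment (hg' : ∀ x, HasDerivAt g (g' x) x)
    (hg'' : ∀ x, HasDerivAt g' (g'' x) x) : Continuous (expectedPayment g g') :=
  continuous_iff_continuousAt.2 fun x =>
    (hasDerivAt_expectedPayment (hg' x) (hg'' x)).continuousAt

lemma expectedPayment_strictMonoOn {a : ℝ} (hg' : ∀ x, HasDerivAt g (g' x) x)
    (hg'' : ∀ x, HasDerivAt g' (g'' x) x) (hpos : ∀ x ∈ Ioo a (1/2), 0 < g'' x) :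
    StrictMonoOn (expectedPayment g g') (Icc a (1/2)) := by
  refine strictMonoOn_of_hasDerivWithinAt_pos (convex_Icc _ _)
    (continuous_expectedPayment hg' hg'').continuousOn
    (fun x _ => (hasDerivAt_expectedPayment (hg' x) (hg'' x)).hasDerivWithinAt) ?_
  rw [interior_Icc]
  intro x hx
  nlinarith [hpos x hx, hx.2]

lemma expectedPayment_strictAntiOn {b : ℝ} (hg' : ∀ x, HasDerivAt g (g' x) x)
    (hg'' : ∀ x, HasDerivAt g' (g'' x) x) (hpos : ∀ x ∈ Ioo (1/2) b, 0 < g'' x) :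
    StrictAntiOn (expectedPayment g g') (Icc (1/2) b) := by
  refine strictAntiOn_of_hasDerivWithinAt_neg (convex_Icc _ _)
    (continuous_expectedPayment hg' hg'').continuousOn
    (fun x _ => (hasDerivAt_expectedPayment (hg' x) (hg'' x)).hasDerivWithinAt) ?_
  rw [interior_Icc]
  intro x hx
  nlinarith [hpos x hx, hx.1]

/-- Uniqueness of one-sided derivatives makes this hold also at boundary points of `s`. -/
lemma eq_neg_of_eqOn_reflect {s : Set ℝ} {c x : ℝ} (hgx : HasDerivAt g (g' x) x)
    (hgcx : HasDerivAt g (g' (c - x)) (c - x)) (hs : UniqueDiffWithinAt ℝ s x) (hx : x ∈ s)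
    (hsym : ∀ y ∈ s, g y = g (c - y)) :
    g' (c - x) = -g' x := by
  have hreflect : HasDerivWithinAt g (g' (c - x) * (-1)) s x :=
    ((hgcx.comp x ((hasDerivAt_id x).const_sub c)).hasDerivWithinAt).congr_of_mem hsym hx
  linarith [hs.eq_deriv s hreflect hgx.hasDerivWithinAt]

lemma expectedPayment_one_sub {x : ℝ} (hg' : ∀ x, HasDerivAt g (g' x) x)
    (hsym : ∀ y ∈ Icc (0:ℝ) 1, g y = g (1 - y)) (hx : x ∈ Icc (0:ℝ) 1) :
    expectedPayment g g' (1 - x) = expectedPayment g g' x := by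
  have hanti : g' (1 - x) = -g' x :=
    eq_neg_of_eqOn_reflect (hg' x) (hg' (1 - x)) (uniqueDiffOn_Icc_zero_one x hx) hx hsym
  simp only [expectedPayment, hanti, ← hsym x hx]
  ring

end

/-- For a symmetric strictly convex generator `g` with
`h(z) = g(z) − (z − 1/2)·g'(z)`: if `z, z' ∈ [0,1]`, `z' ≤ 1/2` and
`h(z) ≥ h(z')`, then `z' ≤ z ≤ 1 − z'`. -/
theorem symmetric_scoring_sandwich (g g' g'' : ℝ → ℝ)
    (hg' : ∀ x : ℝ, HasDerivAt g (g' x) x)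
    (hg'' : ∀ x : ℝ, HasDerivAt g' (g'' x) x)
    (hpos : ∀ x ∈ Set.Icc (0:ℝ) 1, 0 < g'' x)
    (hsym : ∀ x ∈ Set.Icc (0:ℝ) 1, g x = g (1 - x))
    (z z' : ℝ) (hz : z ∈ Set.Icc (0:ℝ) 1) (hz' : z' ∈ Set.Icc (0:ℝ) 1)
    (hhalf : z' ≤ 1/2)
    (hge : g z' - (z' - 1/2) * g' z' ≤ g z - (z - 1/2) * g' z) :
    z' ≤ z ∧ z ≤ 1 - z' := by
  have hmono : StrictMonoOn (expectedPayment g g') (Icc 0 (1/2)) :=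
    expectedPayment_strictMonoOn hg' hg'' fun x hx =>
      hpos x ⟨hx.1.le, by linarith [hx.2]⟩
  have hanti : StrictAntiOn (expectedPayment g g') (Icc (1/2) 1) :=
    expectedPayment_strictAntiOn hg' hg'' fun x hx =>
      hpos x ⟨by linarith [hx.1], hx.2.le⟩
  have hge : expectedPayment g g' z' ≤ expectedPayment g g' z := hge
  constructor
  · by_contra! hlt
    exact (hmono ⟨hz.1, by linarith⟩ ⟨hz'.1, hhalf⟩ hlt).not_ge hge
  · by_contra! hlt
    have hlt' := hanti ⟨by linarith, by linarith [hz'.1]⟩ ⟨by linarith, hz.2⟩ hlt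
    rw [expectedPayment_one_sub hg' hsym hz'] at hlt'
    exact hlt'.not_ge hge
end

section
/- In the scoring-rule coupon game, assume f1(D0) − f1(D1) < ρ < f1(1) − f1(0). Then every Bayesian Nash equilibrium (p, q, x0, x1) satisfies p, q ∈ (0,1) and the posterior-symmetry identity D0·p/(D0·p + D1·(1−q)) = D1·q/(D0·(1−p) + D1·q); equivalently, D0²·p·(1−p) = D1²·q·(1−q). (That is, A's posterior belief that B's type matches the signal is the same after either signal.) -/
/-!
Write `expectedScore g g' c x = g x + (c - x) * g' x` for the expected score of the report `x`
when type 1 has probability `c`, so that `f0 = expectedScore g g' 0`, `f1 = expectedScore g g' 1`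
and `f0 + f1 = 2 * expectedScore g g' (1/2)`. Strict convexity of `g` makes `expectedScore g g' c`
maximal exactly at `c`, strictly increasing below `c` and strictly decreasing above it; symmetry
of `g` makes `f0 + f1` a strictly decreasing function of `|x - 1/2|`.

In equilibrium A reports the Bayesian posteriors. Signal 0 gains a type-0 agent
`ρ - f0 x0 + f0 x1` over signal 1, and signal 1 gains a type-1 agent `ρ - f1 x1 + f1 x0` over
signal 0, so `ρ > 0` forces `x0 < x1`. At pooling, full separation, or a profile where only one
type mixes, the signs of these gains contradict either the bounds on `ρ` or the shape of
`f0 + f1`. At an interior profile both types are indifferent, so `f0 + f1` takes the same value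
at `x0 < x1`; hence `x0 + x1 = 1`, which is the posterior symmetry.
-/

open Set

theorem StrictConvexOn.add_sub_mul_lt_of_hasDerivAt {s : Set ℝ} {f : ℝ → ℝ} {f' x y : ℝ}
    (hf : StrictConvexOn ℝ s f) (hx : x ∈ s) (hy : y ∈ s) (hxy : x ≠ y)
    (hf' : HasDerivAt f f' x) : f x + (y - x) * f' < f y := by
  rcases hxy.lt_or_gt with h | h
  · have := hf.lt_slope_of_hasDerivAt hx hy h hf'
    rw [slope_def_field, lt_div_iff₀ (sub_pos.2 h)] at this
    linarith
  · have := hf.slope_lt_of_hasDerivAt hy hx h hf'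
    rw [slope_def_field, div_lt_iff₀ (sub_pos.2 h)] at this
    linarith

theorem StrictConvexOn.strictMonoOn_of_hasDerivAt {s : Set ℝ} {f f' : ℝ → ℝ}
    (hf : StrictConvexOn ℝ s f) (hf' : ∀ x ∈ s, HasDerivAt f (f' x) x) : StrictMonoOn f' s :=
  fun x hx y hy hxy =>
    (hf.lt_slope_of_hasDerivAt hx hy hxy (hf' x hx)).trans
      (hf.slope_lt_of_hasDerivAt hx hy hxy (hf' y hy))

theorem strictConvexOn_of_hasDerivAt2_pos {D : Set ℝ} (hD : Convex ℝ D) {f f' f'' : ℝ → ℝ}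
    (hf' : ∀ x, HasDerivAt f (f' x) x) (hf'' : ∀ x, HasDerivAt f' (f'' x) x)
    (hpos : ∀ x ∈ D, 0 < f'' x) : StrictConvexOn ℝ D f := by
  have hd : deriv f = f' := funext fun x => (hf' x).deriv
  have hd' : deriv f' = f'' := funext fun x => (hf'' x).deriv
  refine strictConvexOn_of_deriv2_pos' hD
    (fun x _ => (hf' x).continuousAt.continuousWithinAt) fun x hx => ?_
  simpa [hd, hd'] using hpos x hx

def expectedScore (g g' : ℝ → ℝ) (c x : ℝ) : ℝ := g x + (c - x) * g' x

theorem expectedScore_half (g g' : ℝ → ℝ) (x : ℝ) :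
    expectedScore g g' (1/2) x = (expectedScore g g' 0 x + expectedScore g g' 1 x) / 2 := by
  unfold expectedScore; ring

section ExpectedScore

variable {g g' : ℝ → ℝ}

theorem expectedScore_self (c : ℝ) : expectedScore g g' c c = g c := by
  simp [expectedScore]

theorem one_sub_mul_expectedScore_zero_add_mul (c x : ℝ) :
    (1 - c) * expectedScore g g' 0 x + c * expectedScore g g' 1 x = expectedScore g g' c x := by
  unfold expectedScore; ring

theorem expectedScore_lt_self (hconv : StrictConvexOn ℝ (Icc 0 1) g)
    (hg : ∀ x, HasDerivAt g (g' x) x) {c x : ℝ} (hc : c ∈ Icc (0:ℝ) 1)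
    (hx : x ∈ Icc (0:ℝ) 1) (hxc : x ≠ c) : expectedScore g g' c x < g c :=
  hconv.add_sub_mul_lt_of_hasDerivAt hx hc hxc (hg x)

theorem eq_div_of_forall_expectedScore_le (hconv : StrictConvexOn ℝ (Icc 0 1) g)
    (hg : ∀ x, HasDerivAt g (g' x) x) {a b xs : ℝ} (ha : 0 ≤ a) (hb : 0 ≤ b)
    (hab : 0 < a + b) (hxs : xs ∈ Icc (0:ℝ) 1)
    (hmax : ∀ x ∈ Icc (0:ℝ) 1, a * expectedScore g g' 0 x + b * expectedScore g g' 1 x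
      ≤ a * expectedScore g g' 0 xs + b * expectedScore g g' 1 xs) :
    xs = b / (a + b) := by
  set c := b / (a + b)
  have hc : c ∈ Icc (0:ℝ) 1 := ⟨by positivity, (div_le_one hab).2 (by linarith)⟩
  have hbc : (a + b) * c = b := mul_div_cancel₀ b hab.ne'
  have hac : (a + b) * (1 - c) = a := by rw [mul_one_sub, hbc]; ring
  have hcomb : ∀ x, a * expectedScore g g' 0 x + b * expectedScore g g' 1 x
      = (a + b) * expectedScore g g' c x := fun x => by
    rw [← one_sub_mul_expectedScore_zero_add_mul c x]
    linear_combination (-expectedScore g g' 0 x) * hac - expectedScore g g' 1 x * hbc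
  by_contra hne
  have hle := hmax c hc
  rw [hcomb, hcomb, expectedScore_self] at hle
  have := mul_lt_mul_of_pos_left (expectedScore_lt_self hconv hg hc hxs hne) hab
  linarith

theorem expectedScore_strictMonoOn (hconv : StrictConvexOn ℝ (Icc 0 1) g)
    (hg : ∀ x, HasDerivAt g (g' x) x) {c : ℝ} (hc : c ≤ 1) :
    StrictMonoOn (expectedScore g g' c) (Icc 0 c) := by
  intro x hx y hy hxy
  have hx' : x ∈ Icc (0:ℝ) 1 := ⟨hx.1, hx.2.trans hc⟩
  have hy' : y ∈ Icc (0:ℝ) 1 := ⟨hy.1, hy.2.trans hc⟩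
  have hg' := hconv.strictMonoOn_of_hasDerivAt (fun z _ => hg z) hx' hy' hxy
  have htan := hconv.add_sub_mul_lt_of_hasDerivAt hx' hy' hxy.ne (hg x)
  unfold expectedScore
  nlinarith [mul_nonneg (sub_nonneg.2 hy.2) (sub_nonneg.2 hg'.le)]

theorem expectedScore_strictAntiOn (hconv : StrictConvexOn ℝ (Icc 0 1) g)
    (hg : ∀ x, HasDerivAt g (g' x) x) {c : ℝ} (hc : 0 ≤ c) :
    StrictAntiOn (expectedScore g g' c) (Icc c 1) := by
  intro x hx y hy hxy
  have hx' : x ∈ Icc (0:ℝ) 1 := ⟨hc.trans hx.1, hx.2⟩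
  have hy' : y ∈ Icc (0:ℝ) 1 := ⟨hc.trans hy.1, hy.2⟩
  have hg' := hconv.strictMonoOn_of_hasDerivAt (fun z _ => hg z) hx' hy' hxy
  have htan := hconv.add_sub_mul_lt_of_hasDerivAt hy' hx' hxy.ne' (hg y)
  unfold expectedScore
  nlinarith [mul_nonneg (sub_nonneg.2 hx.1) (sub_nonneg.2 hg'.le)]

theorem apply_one_sub_eq_neg_of_symm (hg : ∀ x, HasDerivAt g (g' x) x)
    (hsym : ∀ x ∈ Icc (0:ℝ) 1, g x = g (1 - x)) {x : ℝ} (hx : x ∈ Icc (0:ℝ) 1) :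
    g' (1 - x) = -g' x := by
  have hderiv : HasDerivAt (fun y => g y - g (1 - y)) (g' x + g' (1 - x)) x := by
    have hreflect : HasDerivAt (fun y => g (1 - y)) (g' (1 - x) * (-1)) x :=
      (hg (1 - x)).comp x ((hasDerivAt_id x).const_sub 1)
    exact ((hg x).sub hreflect).congr_deriv (by ring)
  have hzero : HasDerivWithinAt (fun y => g y - g (1 - y)) 0 (Icc 0 1) x :=
    (hasDerivWithinAt_const x _ 0).congr (fun y hy => sub_eq_zero.2 (hsym y hy))
      (sub_eq_zero.2 (hsym x hx))
  -- uniqueness of derivatives within `Icc 0 1` also covers the endpoints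
  have := (uniqueDiffOn_Icc_zero_one x hx).eq_deriv _ hderiv.hasDerivWithinAt hzero
  linarith

theorem expectedScore_one_sub (hg : ∀ x, HasDerivAt g (g' x) x)
    (hsym : ∀ x ∈ Icc (0:ℝ) 1, g x = g (1 - x)) {x : ℝ} (hx : x ∈ Icc (0:ℝ) 1)
    (c : ℝ) : expectedScore g g' c (1 - x) = expectedScore g g' (1 - c) x := by
  unfold expectedScore
  rw [apply_one_sub_eq_neg_of_symm hg hsym hx, ← hsym x hx]
  ring

theorem expectedScore_half_lt_of_abs_lt (hconv : StrictConvexOn ℝ (Icc 0 1) g)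
    (hg : ∀ x, HasDerivAt g (g' x) x) (hsym : ∀ x ∈ Icc (0:ℝ) 1, g x = g (1 - x))
    {x y : ℝ} (hx : x ∈ Icc (0:ℝ) 1) (hy : y ∈ Icc (0:ℝ) 1)
    (h : |y - 1/2| < |x - 1/2|) :
    expectedScore g g' (1/2) x < expectedScore g g' (1/2) y := by
  -- reflect both points into `Icc (1/2) 1`, where `expectedScore g g' (1/2)` is decreasing
  have hfold : ∀ z ∈ Icc (0:ℝ) 1, 1/2 + |z - 1/2| ∈ Icc (1/2:ℝ) 1 ∧
      expectedScore g g' (1/2) (1/2 + |z - 1/2|) = expectedScore g g' (1/2) z := by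
    intro z hz
    rcases le_total (1/2) z with hz2 | hz2
    · rw [abs_of_nonneg (by linarith)]
      exact ⟨⟨by linarith, by linarith [hz.2]⟩, by rw [add_sub_cancel]⟩
    · rw [abs_of_nonpos (by linarith), show 1/2 + -(z - 1/2) = 1 - z by ring,
        expectedScore_one_sub hg hsym hz]
      exact ⟨⟨by linarith, by linarith [hz.1]⟩, by norm_num⟩
  obtain ⟨hx', hxE⟩ := hfold x hx
  obtain ⟨hy', hyE⟩ := hfold y hy
  rw [← hxE, ← hyE]
  exact expectedScore_strictAntiOn hconv hg (by norm_num) hy' hx' (by linarith)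

end ExpectedScore

structure IsCouponBNE (f0 f1 : ℝ → ℝ) (D0 D1 ρ p q x0 x1 : ℝ) : Prop where
  p_mem : p ∈ Icc (0:ℝ) 1
  q_mem : q ∈ Icc (0:ℝ) 1
  x0_mem : x0 ∈ Icc (0:ℝ) 1
  x1_mem : x1 ∈ Icc (0:ℝ) 1
  reports : ∀ x0' ∈ Icc (0:ℝ) 1, ∀ x1' ∈ Icc (0:ℝ) 1,
    D0 * (p * f0 x0' + (1 - p) * f0 x1') + D1 * ((1 - q) * f1 x0' + q * f1 x1')
      ≤ D0 * (p * f0 x0 + (1 - p) * f0 x1) + D1 * ((1 - q) * f1 x0 + q * f1 x1)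
  type0 : ∀ p' ∈ Icc (0:ℝ) 1,
    p' * (ρ - f0 x0) - (1 - p') * f0 x1 ≤ p * (ρ - f0 x0) - (1 - p) * f0 x1
  type1 : ∀ q' ∈ Icc (0:ℝ) 1,
    q' * (ρ - f1 x1) - (1 - q') * f1 x0 ≤ q * (ρ - f1 x1) - (1 - q) * f1 x0

theorem add_nonneg_of_best_response_of_pos {p a c : ℝ}
    (h : ∀ p' ∈ Icc (0:ℝ) 1, p' * a - (1 - p') * c ≤ p * a - (1 - p) * c) (hp : 0 < p) :
    0 ≤ a + c := by
  have := h 0 ⟨le_rfl, zero_le_one⟩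
  nlinarith

theorem add_nonpos_of_best_response_of_lt_one {p a c : ℝ}
    (h : ∀ p' ∈ Icc (0:ℝ) 1, p' * a - (1 - p') * c ≤ p * a - (1 - p) * c) (hp : p < 1) :
    a + c ≤ 0 := by
  have := h 1 ⟨zero_le_one, le_rfl⟩
  nlinarith

namespace IsCouponBNE

variable {g g' : ℝ → ℝ} {D0 D1 ρ p q x0 x1 : ℝ}

theorem report0_eq (hconv : StrictConvexOn ℝ (Icc 0 1) g) (hg : ∀ x, HasDerivAt g (g' x) x)
    (h : IsCouponBNE (expectedScore g g' 0) (expectedScore g g' 1) D0 D1 ρ p q x0 x1)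
    (hD0 : 0 ≤ D0) (hD1 : 0 ≤ D1) (hW : 0 < D0 * p + D1 * (1 - q)) :
    x0 = D1 * (1 - q) / (D0 * p + D1 * (1 - q)) :=
  eq_div_of_forall_expectedScore_le hconv hg (mul_nonneg hD0 h.p_mem.1)
    (mul_nonneg hD1 (sub_nonneg.2 h.q_mem.2)) hW h.x0_mem fun x hx => by
      linarith [h.reports x hx x1 h.x1_mem]

theorem report1_eq (hconv : StrictConvexOn ℝ (Icc 0 1) g) (hg : ∀ x, HasDerivAt g (g' x) x)
    (h : IsCouponBNE (expectedScore g g' 0) (expectedScore g g' 1) D0 D1 ρ p q x0 x1)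
    (hD0 : 0 ≤ D0) (hD1 : 0 ≤ D1) (hW : 0 < D0 * (1 - p) + D1 * q) :
    x1 = D1 * q / (D0 * (1 - p) + D1 * q) :=
  eq_div_of_forall_expectedScore_le hconv hg (mul_nonneg hD0 (sub_nonneg.2 h.p_mem.2))
    (mul_nonneg hD1 h.q_mem.1) hW h.x1_mem fun x hx => by
      linarith [h.reports x0 h.x0_mem x hx]

theorem report0_lt_report1 (hconv : StrictConvexOn ℝ (Icc 0 1) g)
    (hg : ∀ x, HasDerivAt g (g' x) x)
    (h : IsCouponBNE (expectedScore g g' 0) (expectedScore g g' 1) D0 D1 ρ p q x0 x1)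
    (hD0 : 0 < D0) (hD1 : 0 < D1) (hρ : 0 < ρ) : x0 < x1 := by
  rcases h.p_mem.2.lt_or_eq with hp | rfl
  · have := add_nonpos_of_best_response_of_lt_one h.type0 hp
    exact ((expectedScore_strictAntiOn hconv hg le_rfl).lt_iff_gt h.x1_mem h.x0_mem).1
      (by linarith)
  rcases h.q_mem.2.lt_or_eq with hq | rfl
  · have := add_nonpos_of_best_response_of_lt_one h.type1 hq
    exact ((expectedScore_strictMonoOn hconv hg le_rfl).lt_iff_lt h.x0_mem h.x1_mem).1
      (by linarith)
  have hx0 := h.report0_eq hconv hg hD0.le hD1.le (by simpa)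
  have hx1 := h.report1_eq hconv hg hD0.le hD1.le (by simpa)
  simp only [sub_self, mul_zero, mul_one, add_zero, zero_add, zero_div] at hx0 hx1
  rw [hx0, hx1, div_self hD1.ne']
  exact zero_lt_one

theorem p_pos (hconv : StrictConvexOn ℝ (Icc 0 1) g) (hg : ∀ x, HasDerivAt g (g' x) x)
    (h : IsCouponBNE (expectedScore g g' 0) (expectedScore g g' 1) D0 D1 ρ p q x0 x1)
    (hD1 : 0 < D1) (hD : D1 ≤ D0) (hsum : D0 + D1 = 1) (hρ : 0 < ρ) : 0 < p := by
  have hD0 : 0 < D0 := hD1.trans_le hD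
  have hlt := h.report0_lt_report1 hconv hg hD0 hD1 hρ
  refine h.p_mem.1.lt_of_ne fun hp => ?_
  subst hp
  rcases h.q_mem.2.lt_or_eq with hq | rfl
  · have hx0 := h.report0_eq hconv hg hD0.le hD1.le (by nlinarith)
    rw [mul_zero, zero_add, div_self (by nlinarith)] at hx0
    linarith [h.x1_mem.2]
  have hx1 := h.report1_eq hconv hg hD0.le hD1.le (by linarith)
  rw [sub_zero, mul_one, mul_one, hsum, div_one] at hx1
  subst hx1
  have hs0 := add_nonpos_of_best_response_of_lt_one h.type0 zero_lt_one
  have hs1 := add_nonneg_of_best_response_of_pos h.type1 zero_lt_one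
  have hhalf := expectedScore_strictMonoOn hconv hg (c := 1/2) (by norm_num)
    ⟨h.x0_mem.1, by linarith⟩ ⟨hD1.le, by linarith⟩ hlt
  linarith [expectedScore_half g g' x0, expectedScore_half g g' x1]

theorem q_pos (hconv : StrictConvexOn ℝ (Icc 0 1) g) (hg : ∀ x, HasDerivAt g (g' x) x)
    (hsym : ∀ x ∈ Icc (0:ℝ) 1, g x = g (1 - x))
    (h : IsCouponBNE (expectedScore g g' 0) (expectedScore g g' 1) D0 D1 ρ p q x0 x1)
    (hD1 : 0 < D1) (hD : D1 ≤ D0) (hsum : D0 + D1 = 1) (hρ : 0 < ρ)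
    (hρlo : expectedScore g g' 1 D0 - expectedScore g g' 1 D1 < ρ) : 0 < q := by
  have hD0 : 0 < D0 := hD1.trans_le hD
  have hlt := h.report0_lt_report1 hconv hg hD0 hD1 hρ
  refine h.q_mem.1.lt_of_ne fun hq => ?_
  subst hq
  rcases h.p_mem.2.lt_or_eq with hp | rfl
  · have hx1 := h.report1_eq hconv hg hD0.le hD1.le (by nlinarith)
    rw [mul_zero, add_zero, zero_div] at hx1
    linarith [h.x0_mem.1]
  have hx0 := h.report0_eq hconv hg hD0.le hD1.le (by linarith)
  rw [sub_zero, mul_one, mul_one, hsum, div_one] at hx0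
  subst hx0
  have hs0 := add_nonneg_of_best_response_of_pos h.type0 zero_lt_one
  have hs1 := add_nonpos_of_best_response_of_lt_one h.type1 zero_lt_one
  have hx1 : D0 < x1 := by
    by_contra! hle
    have := ((expectedScore_strictMonoOn hconv hg le_rfl).le_iff_le h.x1_mem
      ⟨hD0.le, by linarith⟩).2 hle
    linarith
  have hhalf := expectedScore_half_lt_of_abs_lt hconv hg hsym h.x1_mem ⟨hD1.le, by linarith⟩
    (by rw [abs_of_nonpos (by linarith), abs_of_pos (by linarith)]; linarith)
  linarith [expectedScore_half g g' x0, expectedScore_half g g' x1]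

theorem q_lt_one (hconv : StrictConvexOn ℝ (Icc 0 1) g) (hg : ∀ x, HasDerivAt g (g' x) x)
    (hsym : ∀ x ∈ Icc (0:ℝ) 1, g x = g (1 - x))
    (h : IsCouponBNE (expectedScore g g' 0) (expectedScore g g' 1) D0 D1 ρ p q x0 x1)
    (hD0 : 0 < D0) (hD1 : 0 < D1)
    (hρhi : ρ < expectedScore g g' 1 1 - expectedScore g g' 1 0) (hp : 0 < p) : q < 1 := by
  refine h.q_mem.2.lt_of_ne fun hq => ?_
  subst hq
  have hx0 := h.report0_eq hconv hg hD0.le hD1.le (by simpa using mul_pos hD0 hp)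
  rw [sub_self, mul_zero, zero_div] at hx0
  subst hx0
  have hs1 := add_nonneg_of_best_response_of_pos h.type1 zero_lt_one
  rcases h.p_mem.2.lt_or_eq with hp1 | rfl
  · have hs0 := add_nonpos_of_best_response_of_lt_one h.type0 hp1
    have hW : 0 < D0 * (1 - p) + D1 * 1 := by nlinarith
    have hx1 := h.report1_eq hconv hg hD0.le hD1.le hW
    have hx1pos : 0 < x1 := by rw [hx1]; positivity
    have hx1lt : x1 < 1 := by rw [hx1, div_lt_one hW]; nlinarith
    have hhalf := expectedScore_half_lt_of_abs_lt hconv hg hsym (x := 0) ⟨le_rfl, zero_le_one⟩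
      h.x1_mem (by rw [abs_sub_lt_iff]; norm_num; constructor <;> linarith)
    linarith [expectedScore_half g g' 0, expectedScore_half g g' x1]
  have hx1 := h.report1_eq hconv hg hD0.le hD1.le (by simpa)
  rw [sub_self, mul_zero, zero_add, mul_one, div_self hD1.ne'] at hx1
  subst hx1
  have hs0 := add_nonneg_of_best_response_of_pos h.type0 zero_lt_one
  have h00 := expectedScore_one_sub hg hsym (x := 0) ⟨le_rfl, zero_le_one⟩ 1
  have h10 := expectedScore_one_sub hg hsym (x := 1) ⟨zero_le_one, le_rfl⟩ 1
  norm_num at h00 h10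
  linarith

theorem p_lt_one (hconv : StrictConvexOn ℝ (Icc 0 1) g) (hg : ∀ x, HasDerivAt g (g' x) x)
    (hsym : ∀ x ∈ Icc (0:ℝ) 1, g x = g (1 - x))
    (h : IsCouponBNE (expectedScore g g' 0) (expectedScore g g' 1) D0 D1 ρ p q x0 x1)
    (hD0 : 0 < D0) (hD1 : 0 < D1) (hq0 : 0 < q) (hq1 : q < 1) : p < 1 := by
  refine h.p_mem.2.lt_of_ne fun hp => ?_
  subst hp
  have hx1 := h.report1_eq hconv hg hD0.le hD1.le (by simpa using mul_pos hD1 hq0)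
  rw [sub_self, mul_zero, zero_add, div_self (mul_pos hD1 hq0).ne'] at hx1
  subst hx1
  have hs0 := add_nonneg_of_best_response_of_pos h.type0 zero_lt_one
  have hs1 := add_nonpos_of_best_response_of_lt_one h.type1 hq1
  have hs1' := add_nonneg_of_best_response_of_pos h.type1 hq0
  have hW : 0 < D0 * 1 + D1 * (1 - q) := by nlinarith
  have hx0 := h.report0_eq hconv hg hD0.le hD1.le hW
  have hx0pos : 0 < x0 := by rw [hx0]; exact div_pos (mul_pos hD1 (by linarith)) hW
  have hx0lt : x0 < 1 := by rw [hx0, div_lt_one hW]; linarith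
  have hhalf := expectedScore_half_lt_of_abs_lt hconv hg hsym (x := 1)
    ⟨zero_le_one, le_rfl⟩ h.x0_mem (by rw [abs_sub_lt_iff]; norm_num; constructor <;> linarith)
  linarith [expectedScore_half g g' 1, expectedScore_half g g' x0]

theorem report0_add_report1 (hconv : StrictConvexOn ℝ (Icc 0 1) g)
    (hg : ∀ x, HasDerivAt g (g' x) x) (hsym : ∀ x ∈ Icc (0:ℝ) 1, g x = g (1 - x))
    (h : IsCouponBNE (expectedScore g g' 0) (expectedScore g g' 1) D0 D1 ρ p q x0 x1)
    (hρ : 0 < ρ) (hp : p ∈ Ioo (0:ℝ) 1) (hq : q ∈ Ioo (0:ℝ) 1) : x0 + x1 = 1 := by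
  have hs0 := le_antisymm (add_nonpos_of_best_response_of_lt_one h.type0 hp.2)
    (add_nonneg_of_best_response_of_pos h.type0 hp.1)
  have hs1 := le_antisymm (add_nonpos_of_best_response_of_lt_one h.type1 hq.2)
    (add_nonneg_of_best_response_of_pos h.type1 hq.1)
  have hlt : x0 < x1 :=
    ((expectedScore_strictAntiOn hconv hg le_rfl).lt_iff_gt h.x1_mem h.x0_mem).1 (by linarith)
  have hE : expectedScore g g' (1/2) x0 = expectedScore g g' (1/2) x1 := by
    linarith [expectedScore_half g g' x0, expectedScore_half g g' x1]
  have habs : |x0 - 1/2| = |x1 - 1/2| := le_antisymm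
    (not_lt.1 fun h' =>
      (expectedScore_half_lt_of_abs_lt hconv hg hsym h.x0_mem h.x1_mem h').ne hE)
    (not_lt.1 fun h' =>
      (expectedScore_half_lt_of_abs_lt hconv hg hsym h.x1_mem h.x0_mem h').ne' hE)
  rcases abs_eq_abs.1 habs with h' | h' <;> linarith

end IsCouponBNE

/-- In the scoring-rule coupon game with a symmetric proper scoring rule and
`f1(D0) − f1(D1) < ρ < f1(1) − f1(0)`, every Bayesian Nash equilibrium
`(p, q, x0, x1)` has `p, q ∈ (0,1)` and satisfies the posterior-symmetry
identity (equivalently `D0²·p·(1−p) = D1²·q·(1−q)`). -/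
theorem scoring_rule_BNE_posterior_symmetry (g g' g'' : ℝ → ℝ)
    (hg' : ∀ x : ℝ, HasDerivAt g (g' x) x)
    (hg'' : ∀ x : ℝ, HasDerivAt g' (g'' x) x)
    (hpos : ∀ x ∈ Set.Icc (0:ℝ) 1, 0 < g'' x)
    (hsym : ∀ x ∈ Set.Icc (0:ℝ) 1, g x = g (1 - x))
    (f0 f1 : ℝ → ℝ)
    (hf0 : ∀ x, f0 x = g x - x * g' x)
    (hf1 : ∀ x, f1 x = g x + (1 - x) * g' x)
    (D0 D1 ρ : ℝ) (hD1 : 0 < D1) (hD : D1 ≤ D0) (hsum : D0 + D1 = 1)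
    (hρpos : 0 < ρ)
    (hρlo : f1 D0 - f1 D1 < ρ) (hρhi : ρ < f1 1 - f1 0)
    (p q x0 x1 : ℝ)
    (hp : p ∈ Set.Icc (0:ℝ) 1) (hq : q ∈ Set.Icc (0:ℝ) 1)
    (hx0 : x0 ∈ Set.Icc (0:ℝ) 1) (hx1 : x1 ∈ Set.Icc (0:ℝ) 1)
    -- (i) A's reports (x0, x1) are a best response
    (hA : ∀ x0' ∈ Set.Icc (0:ℝ) 1, ∀ x1' ∈ Set.Icc (0:ℝ) 1,
      D0 * (p * f0 x0' + (1 - p) * f0 x1') + D1 * ((1 - q) * f1 x0' + q * f1 x1')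
        ≤ D0 * (p * f0 x0 + (1 - p) * f0 x1) + D1 * ((1 - q) * f1 x0 + q * f1 x1))
    -- (ii) p is a best response for the type-0 B agent
    (hB0 : ∀ p' ∈ Set.Icc (0:ℝ) 1,
      p' * (ρ - f0 x0) - (1 - p') * f0 x1 ≤ p * (ρ - f0 x0) - (1 - p) * f0 x1)
    -- (iii) q is a best response for the type-1 B agent
    (hB1 : ∀ q' ∈ Set.Icc (0:ℝ) 1,
      q' * (ρ - f1 x1) - (1 - q') * f1 x0 ≤ q * (ρ - f1 x1) - (1 - q) * f1 x0) :
    p ∈ Set.Ioo (0:ℝ) 1 ∧ q ∈ Set.Ioo (0:ℝ) 1 ∧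
    D0 * p / (D0 * p + D1 * (1 - q)) = D1 * q / (D0 * (1 - p) + D1 * q) ∧
    D0 ^ 2 * p * (1 - p) = D1 ^ 2 * q * (1 - q) := by
  obtain rfl : f0 = expectedScore g g' 0 := funext fun x => by rw [hf0, expectedScore]; ring
  obtain rfl : f1 = expectedScore g g' 1 := funext hf1
  have hconv : StrictConvexOn ℝ (Icc 0 1) g :=
    strictConvexOn_of_hasDerivAt2_pos (convex_Icc 0 1) hg' hg'' hpos
  have h : IsCouponBNE _ _ D0 D1 ρ p q x0 x1 := ⟨hp, hq, hx0, hx1, hA, hB0, hB1⟩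
  have hD0 : 0 < D0 := hD1.trans_le hD
  have hp0 := h.p_pos hconv hg' hD1 hD hsum hρpos
  have hq0 := h.q_pos hconv hg' hsym hD1 hD hsum hρpos hρlo
  have hq1 := h.q_lt_one hconv hg' hsym hD0 hD1 hρhi hp0
  have hp1 := h.p_lt_one hconv hg' hsym hD0 hD1 hq0 hq1
  have hW0 : 0 < D0 * p + D1 * (1 - q) := by nlinarith
  have hW1 : 0 < D0 * (1 - p) + D1 * q := by nlinarith
  have hx01 := h.report0_add_report1 hconv hg' hsym hρpos ⟨hp0, hp1⟩ ⟨hq0, hq1⟩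
  rw [h.report0_eq hconv hg' hD0.le hD1.le hW0, h.report1_eq hconv hg' hD0.le hD1.le hW1] at hx01
  have hratio : D0 * p / (D0 * p + D1 * (1 - q)) = D1 * q / (D0 * (1 - p) + D1 * q) := by
    have := add_div (D0 * p) (D1 * (1 - q)) (D0 * p + D1 * (1 - q))
    rw [div_self hW0.ne'] at this
    linarith
  refine ⟨⟨hp0, hp1⟩, ⟨hq0, hq1⟩, hratio, ?_⟩
  rw [div_eq_div_iff hW0.ne' hW1.ne'] at hratio
  linear_combination hratio
end

section
/- Consider the scoring-rule coupon game with the quadratic scoring rule f0(x) = 2 − 2x², f1(x) = 4x − 2x² (derived from g(x) = 2 − 2x + 2x²), with D0, D1 > 0, D0 + D1 = 1 and ρ > 0. Then every Bayesian Nash equilibrium (p, q, x0, x1) with p, q ∈ (0,1) satisfies x0 = (2−ρ)/4 and x1 = (2+ρ)/4. -/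
/-!
Both types of B mix strictly, so each is indifferent between its two signals. For the quadratic
rule the two indifference conditions read `ρ = 2 (x1² − x0²)` and `ρ = 4 (x1 − x0) − 2 (x1² − x0²)`;
together they give `(x1 − x0)(x0 + x1 − 1) = 0`, and `x0 = x1` would force `ρ = 0`. Hence
`x0 + x1 = 1` and `x1 − x0 = ρ / 2`.
-/

theorem add_eq_zero_of_interior_best_response {a b p : ℝ} (hp : p ∈ Set.Ioo (0:ℝ) 1)
    (h : ∀ p' ∈ Set.Icc (0:ℝ) 1, p' * a - (1 - p') * b ≤ p * a - (1 - p) * b) :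
    a + b = 0 := by
  obtain ⟨hp0, hp1⟩ := hp
  have h_vs_zero : 0 ≤ p * (a + b) := by
    linarith [h 0 (Set.left_mem_Icc.mpr zero_le_one)]
  have h_vs_one : (1 - p) * (a + b) ≤ 0 := by
    linarith [h 1 (Set.right_mem_Icc.mpr zero_le_one)]
  have hnonneg : 0 ≤ a + b := nonneg_of_mul_nonneg_right h_vs_zero hp0
  have hnonpos : a + b ≤ 0 := nonpos_of_mul_nonpos_right h_vs_one (sub_pos.mpr hp1)
  linarith

theorem quadratic_reports_of_indifference {ρ x0 x1 : ℝ} (hρ : ρ ≠ 0)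
    (h0 : ρ - (2 - 2 * x0 ^ 2) + (2 - 2 * x1 ^ 2) = 0)
    (h1 : ρ - (4 * x1 - 2 * x1 ^ 2) + (4 * x0 - 2 * x0 ^ 2) = 0) :
    x0 = (2 - ρ) / 4 ∧ x1 = (2 + ρ) / 4 := by
  have hfactor : (x1 - x0) * (x0 + x1 - 1) = 0 := by linear_combination (h1 - h0) / 4
  have hne : x1 - x0 ≠ 0 := by
    intro hx
    apply hρ
    linear_combination h0 + 2 * (x0 + x1) * hx
  have hsum : x0 + x1 = 1 := by
    linarith [(mul_eq_zero.mp hfactor).resolve_left hne]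
  have hdiff : x1 - x0 = ρ / 2 := by
    linear_combination -h0 / 2 - (x1 - x0) * hsum
  constructor <;> linarith

theorem quadratic_scoring_rule_BNE_general (ρ : ℝ)
    (hρ : 0 < ρ)
    (f0 f1 : ℝ → ℝ)
    (hf0 : ∀ x, f0 x = 2 - 2 * x ^ 2)
    (hf1 : ∀ x, f1 x = 4 * x - 2 * x ^ 2)
    (p q x0 x1 : ℝ)
    (hp : p ∈ Set.Ioo (0:ℝ) 1) (hq : q ∈ Set.Ioo (0:ℝ) 1)
    -- (ii) p is a best response for the type-0 B agent
    (hB0 : ∀ p' ∈ Set.Icc (0:ℝ) 1,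
      p' * (ρ - f0 x0) - (1 - p') * f0 x1 ≤ p * (ρ - f0 x0) - (1 - p) * f0 x1)
    -- (iii) q is a best response for the type-1 B agent
    (hB1 : ∀ q' ∈ Set.Icc (0:ℝ) 1,
      q' * (ρ - f1 x1) - (1 - q') * f1 x0 ≤ q * (ρ - f1 x1) - (1 - q) * f1 x0) :
    x0 = (2 - ρ) / 4 ∧ x1 = (2 + ρ) / 4 := by
  have h0 := add_eq_zero_of_interior_best_response hp hB0
  have h1 := add_eq_zero_of_interior_best_response hq hB1
  rw [hf0, hf0] at h0
  rw [hf1, hf1] at h1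
  exact quadratic_reports_of_indifference hρ.ne' h0 h1

/-- In the scoring-rule coupon game with the quadratic scoring rule
`f0(x) = 2 − 2x²`, `f1(x) = 4x − 2x²`, every Bayesian Nash equilibrium
`(p, q, x0, x1)` with `p, q ∈ (0,1)` satisfies `x0 = (2−ρ)/4` and
`x1 = (2+ρ)/4`. -/
theorem quadratic_scoring_rule_BNE (D0 D1 ρ : ℝ)
    (hD0 : 0 < D0) (hD1 : 0 < D1) (hsum : D0 + D1 = 1) (hρ : 0 < ρ)
    (f0 f1 : ℝ → ℝ)
    (hf0 : ∀ x, f0 x = 2 - 2 * x ^ 2)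
    (hf1 : ∀ x, f1 x = 4 * x - 2 * x ^ 2)
    (p q x0 x1 : ℝ)
    (hp : p ∈ Set.Ioo (0:ℝ) 1) (hq : q ∈ Set.Ioo (0:ℝ) 1)
    (hx0 : x0 ∈ Set.Icc (0:ℝ) 1) (hx1 : x1 ∈ Set.Icc (0:ℝ) 1)
    -- (i) A's reports (x0, x1) are a best response
    (hA : ∀ x0' ∈ Set.Icc (0:ℝ) 1, ∀ x1' ∈ Set.Icc (0:ℝ) 1,
      D0 * (p * f0 x0' + (1 - p) * f0 x1') + D1 * ((1 - q) * f1 x0' + q * f1 x1')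
        ≤ D0 * (p * f0 x0 + (1 - p) * f0 x1) + D1 * ((1 - q) * f1 x0 + q * f1 x1))
    -- (ii) p is a best response for the type-0 B agent
    (hB0 : ∀ p' ∈ Set.Icc (0:ℝ) 1,
      p' * (ρ - f0 x0) - (1 - p') * f0 x1 ≤ p * (ρ - f0 x0) - (1 - p) * f0 x1)
    -- (iii) q is a best response for the type-1 B agent
    (hB1 : ∀ q' ∈ Set.Icc (0:ℝ) 1,
      q' * (ρ - f1 x1) - (1 - q') * f1 x0 ≤ q * (ρ - f1 x1) - (1 - q) * f1 x0) :
    x0 = (2 - ρ) / 4 ∧ x1 = (2 + ρ) / 4 :=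
  quadratic_scoring_rule_BNE_general ρ hρ f0 f1 hf0 hf1 p q x0 x1 hp hq hB0 hB1
end

section
/- In the identity-payment coupon game with ρ0 ≠ ρ1, every Bayesian Nash equilibrium (p, q, x, y) has at least one of p, q in {0, 1}; that is, at least one of the two types of B agent plays a pure strategy. -/
/-- Bayesian Nash equilibrium of the identity-payment coupon game with priors
`D0, D1`, coupon values `ρ0, ρ1`, a strategy `(p, q)` for the two types of B and
a strategy `(x, y)` for A. -/
def IdBNE (D0 D1 ρ0 ρ1 p q x y : ℝ) : Prop :=
  p ∈ Set.Icc (0:ℝ) 1 ∧ q ∈ Set.Icc (0:ℝ) 1 ∧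
  x ∈ Set.Icc (0:ℝ) 1 ∧ y ∈ Set.Icc (0:ℝ) 1 ∧
  (∀ x' ∈ Set.Icc (0:ℝ) 1, ∀ y' ∈ Set.Icc (0:ℝ) 1,
    D0 * (p * x' + (1 - p) * (1 - y')) + D1 * (q * y' + (1 - q) * (1 - x'))
      ≤ D0 * (p * x + (1 - p) * (1 - y)) + D1 * (q * y + (1 - q) * (1 - x))) ∧
  (∀ p' ∈ Set.Icc (0:ℝ) 1,
    p' * (ρ0 - x) + (1 - p') * (y - 1) ≤ p * (ρ0 - x) + (1 - p) * (y - 1)) ∧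
  (∀ q' ∈ Set.Icc (0:ℝ) 1,
    q' * (ρ1 - y) + (1 - q') * (x - 1) ≤ q * (ρ1 - y) + (1 - q) * (x - 1))

/-!
A type of B that mixes strictly must be indifferent between its two signals, since a mixture
`t a + (1 - t) b` with `0 < t < 1` is maximal over `t ∈ [0, 1]` only when `a = b`. If both types
mixed, indifference would give `ρ0 - x = y - 1` and `ρ1 - y = x - 1`, i.e. `ρ0 = x + y - 1 = ρ1`.
-/

open Set

theorem eq_zero_or_eq_one_or_eq_of_forall_mix_le {a b t : ℝ} (ht : t ∈ Icc (0 : ℝ) 1)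
    (hmax : ∀ t' ∈ Icc (0 : ℝ) 1, t' * a + (1 - t') * b ≤ t * a + (1 - t) * b) :
    t = 0 ∨ t = 1 ∨ a = b := by
  rcases ht.1.eq_or_lt with rfl | ht0
  · exact Or.inl rfl
  rcases ht.2.eq_or_lt with rfl | ht1
  · exact Or.inr (Or.inl rfl)
  have hab : b ≤ a := by
    have h := hmax 0 (left_mem_Icc.2 zero_le_one)
    nlinarith
  have hba : a ≤ b := by
    have h := hmax 1 (right_mem_Icc.2 zero_le_one)
    nlinarith
  exact Or.inr (Or.inr (le_antisymm hba hab))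

theorem identity_payment_BNE_pure_type_general (D0 D1 ρ0 ρ1 p q x y : ℝ)
    (hρ : ρ0 ≠ ρ1)
    (hBNE : IdBNE D0 D1 ρ0 ρ1 p q x y) :
    p = 0 ∨ p = 1 ∨ q = 0 ∨ q = 1 := by
  obtain ⟨hp, hq, -, -, -, hP, hQ⟩ := hBNE
  rcases eq_zero_or_eq_one_or_eq_of_forall_mix_le hp hP with hp | hp | hp_indiff
  · exact Or.inl hp
  · exact Or.inr (Or.inl hp)
  rcases eq_zero_or_eq_one_or_eq_of_forall_mix_le hq hQ with hq | hq | hq_indiff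
  · exact Or.inr (Or.inr (Or.inl hq))
  · exact Or.inr (Or.inr (Or.inr hq))
  exact absurd (by linarith) hρ

/-- In the identity-payment coupon game with `ρ0 ≠ ρ1`, in every Bayesian Nash
equilibrium at least one of the two types of B agent plays a pure strategy. -/
theorem identity_payment_BNE_pure_type (D0 D1 ρ0 ρ1 p q x y : ℝ)
    (hD1 : 0 < D1) (hD : D1 ≤ D0) (hsum : D0 + D1 = 1)
    (hρ0 : 0 < ρ0) (hρ1 : 0 < ρ1) (hρ : ρ0 ≠ ρ1)
    (hBNE : IdBNE D0 D1 ρ0 ρ1 p q x y) :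
    p = 0 ∨ p = 1 ∨ q = 0 ∨ q = 1 :=
  identity_payment_BNE_pure_type_general D0 D1 ρ0 ρ1 p q x y hρ hBNE
end

section
/- In the identity-payment coupon game with D0 > D1 and equal coupon values ρ0 = ρ1 = ρ ∈ (0,1), the strategy profile (p, q, x, y) = (D0, D0, 1, ρ) is a Bayesian Nash equilibrium. In particular, both types of B send the truthful signal with the same probability D0 ∈ (1/2, 1), i.e., B plays a Randomized Response strategy preserving ln(D0/D1)-differential privacy. -/
open Set

section CouponGame

variable {D0 D1 : ℝ}

theorem guessPayoff_randomizedResponse (hsum : D0 + D1 = 1) (x y : ℝ) :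
    D0 * (D0 * x + (1 - D0) * (1 - y)) + D1 * (D0 * y + (1 - D0) * (1 - x))
      = (D0 - D1) * x + D1 := by
  obtain rfl : D1 = 1 - D0 := by linarith
  ring

theorem guessPayoff_randomizedResponse_le (hD : D1 ≤ D0) (hsum : D0 + D1 = 1)
    {x' : ℝ} (hx' : x' ≤ 1) (y y' : ℝ) :
    D0 * (D0 * x' + (1 - D0) * (1 - y')) + D1 * (D0 * y' + (1 - D0) * (1 - x'))
      ≤ D0 * (D0 * 1 + (1 - D0) * (1 - y)) + D1 * (D0 * y + (1 - D0) * (1 - 1)) := by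
  rw [guessPayoff_randomizedResponse hsum, guessPayoff_randomizedResponse hsum]
  have := mul_le_mul_of_nonneg_left hx' (sub_nonneg.2 hD)
  linarith

end CouponGame

theorem mix_le_mix_of_indifferent {a b : ℝ} (hab : a = b) (s t : ℝ) :
    s * a + (1 - s) * b ≤ t * a + (1 - t) * b := by
  subst hab
  exact (by ring : s * a + (1 - s) * a = t * a + (1 - t) * a).le

/-- In the identity-payment coupon game with `D0 > D1` and equal coupon values
`ρ0 = ρ1 = ρ ∈ (0,1)`, the profile `(p, q, x, y) = (D0, D0, 1, ρ)` is a Bayesian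
Nash equilibrium; in particular both types of B send the truthful signal with
the same probability `D0 ∈ (1/2, 1)` (Randomized Response with
`ε = ln(D0/D1)`). -/
theorem identity_payment_randomized_response_BNE (D0 D1 ρ : ℝ)
    (hD1 : 0 < D1) (hD : D1 < D0) (hsum : D0 + D1 = 1)
    (hρ : ρ ∈ Set.Ioo (0:ℝ) 1) :
    IdBNE D0 D1 ρ ρ D0 D0 1 ρ ∧ 1/2 < D0 ∧ D0 < 1 := by
  obtain ⟨hρ0, hρ1⟩ := hρ
  have hD0_half : 1/2 < D0 := by linarith
  have hD0_lt : D0 < 1 := by linarith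
  have hD0_mem : D0 ∈ Icc (0:ℝ) 1 := ⟨by linarith, hD0_lt.le⟩
  refine ⟨⟨hD0_mem, hD0_mem, ⟨zero_le_one, le_rfl⟩, ⟨hρ0.le, hρ1.le⟩, ?_, ?_, ?_⟩,
    hD0_half, hD0_lt⟩
  · exact fun x' hx' y' _ => guessPayoff_randomizedResponse_le hD.le hsum hx'.2 ρ y'
  · exact fun p' _ => mix_le_mix_of_indifferent rfl p' D0
  · exact fun q' _ => mix_le_mix_of_indifferent (by simp) q' D0
end

section
/- In the identity-payment coupon game with random coupon valuations, every Bayesian Nash equilibrium ((σ0, σ1), (x, y)) satisfies: x = 1; if μ((−∞,1)) ≥ D1 then μ((−∞,y)) = D1, while if μ((−∞,1)) < D1 then y = 1; and for each type t ∈ {0,1} and every valuation ρ > 0, if ρ > y then σ_t(ρ) = 1 and if ρ < y then σ_t(ρ) = 0. That is, B follows a threshold strategy with threshold y: agents valuing the coupon above y report truthfully and agents valuing it below y lie. -/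
/-!
A type-`t` agent with valuation `ρ` gains `ρ - (x + y - 1)` per unit of probability moved from
lying to telling the truth, so both types play the threshold strategy with threshold
`T = x + y - 1`. A's expected payoff is then linear in `x` and `y`, with slopes `D0 - F T` and
`D1 - F T`, where `F T = μ((-∞, T))` is the probability that B lies. If `x < 1`, then
`F T ≥ D0 > D1` forces `y = 0`, so `T < 0` and `F T = 0`, a contradiction. Hence `x = 1`, the
threshold is `y`, and optimality of `y` gives `F y = D1` unless `y = 1`.
-/

open MeasureTheory Set

theorem eq_one_of_isMaxOn_mul {c s : ℝ} (h : IsMaxOn (· * c) (Icc 0 1) s) (hs : s ≤ 1)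
    (hc : 0 < c) : s = 1 := by
  have := isMaxOn_iff.1 h 1 (right_mem_Icc.2 zero_le_one)
  exact le_antisymm hs (le_of_mul_le_mul_right (by simpa using this) hc)

theorem eq_zero_of_isMaxOn_mul {c s : ℝ} (h : IsMaxOn (· * c) (Icc 0 1) s) (hs : 0 ≤ s)
    (hc : c < 0) : s = 0 := by
  have := isMaxOn_iff.1 h 0 (left_mem_Icc.2 zero_le_one)
  exact le_antisymm (by nlinarith) hs

def IsThresholdStrategy (σ : ℝ → ℝ) (T : ℝ) : Prop :=
  ∀ ρ, 0 < ρ → (T < ρ → σ ρ = 1) ∧ (ρ < T → σ ρ = 0)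

theorem isThresholdStrategy_of_bestResponse {σ : ℝ → ℝ} {u v : ℝ}
    (hσ : ∀ ρ, σ ρ ∈ Icc (0:ℝ) 1)
    (h : ∀ ρ, 0 < ρ → ∀ p ∈ Icc (0:ℝ) 1,
      p * (ρ - u) + (1 - p) * (v - 1) ≤ σ ρ * (ρ - u) + (1 - σ ρ) * (v - 1)) :
    IsThresholdStrategy σ (u + v - 1) := by
  intro ρ hρ
  have hmax : IsMaxOn (· * (ρ - (u + v - 1))) (Icc 0 1) (σ ρ) :=
    isMaxOn_iff.2 fun p hp => by linarith [h ρ hρ p hp]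
  exact ⟨fun hlt => eq_one_of_isMaxOn_mul hmax (hσ ρ).2 (by linarith),
    fun hlt => eq_zero_of_isMaxOn_mul hmax (hσ ρ).1 (by linarith)⟩

namespace IsThresholdStrategy

variable {σ : ℝ → ℝ} {T : ℝ} {μ : Measure ℝ}

theorem ae_eq_indicator [NullSingletonClass μ] (h : IsThresholdStrategy σ T)
    (hμ : μ (Iic 0) = 0) : σ =ᵐ[μ] (Ici T).indicator 1 := by
  have hpos : ∀ᵐ ρ ∂μ, 0 < ρ := ae_iff.2 (measure_mono_null (fun _ => not_lt.1) hμ)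
  have hne : ∀ᵐ ρ ∂μ, ρ ≠ T := ae_iff.2 (by simp)
  filter_upwards [hpos, hne] with ρ hρ hρT
  rcases hρT.lt_or_gt with hlt | hgt
  · simp [(h ρ hρ).2 hlt, hlt.not_ge]
  · simp [(h ρ hρ).1 hgt, hgt.le]

theorem integral_eq [IsProbabilityMeasure μ] [NullSingletonClass μ]
    (h : IsThresholdStrategy σ T) (hμ : μ (Iic 0) = 0) :
    ∫ ρ, σ ρ ∂μ = 1 - μ.real (Iio T) := by
  rw [integral_congr_ae (h.ae_eq_indicator hμ), integral_indicator_one measurableSet_Ici,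
    ← compl_Iio, probReal_compl_eq_one_sub measurableSet_Iio]

theorem integral_one_sub_eq [IsFiniteMeasure μ] [NullSingletonClass μ]
    (h : IsThresholdStrategy σ T) (hμ : μ (Iic 0) = 0) :
    ∫ ρ, (1 - σ ρ) ∂μ = μ.real (Iio T) := by
  have : (fun ρ => 1 - σ ρ) =ᵐ[μ] (Iio T).indicator 1 := by
    filter_upwards [h.ae_eq_indicator hμ] with ρ hρ
    rw [hρ, ← compl_Ici, indicator_compl]
    rfl
  rw [integral_congr_ae this, integral_indicator_one measurableSet_Iio]

end IsThresholdStrategy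

section Guesses

variable {D D0 D1 x y : ℝ} {F : ℝ → ℝ}

theorem eq_one_of_isMaxOn_guesses (hD1 : 0 < D1) (hD : D1 < D0) (hF : ∀ T ≤ 0, F T = 0)
    (hx : x ≤ 1) (hy : 0 ≤ y) (hAx : IsMaxOn (· * (D0 - F (x + y - 1))) (Icc 0 1) x)
    (hAy : IsMaxOn (· * (D1 - F (x + y - 1))) (Icc 0 1) y) : x = 1 := by
  by_contra hne
  have hDF : D0 ≤ F (x + y - 1) :=
    not_lt.1 fun h => hne (eq_one_of_isMaxOn_mul hAx hx (sub_pos.2 h))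
  have hy0 : y = 0 := eq_zero_of_isMaxOn_mul hAy hy (by linarith)
  have hF0 := hF (x + y - 1) (by linarith)
  linarith

theorem pos_of_isMaxOn_mul_sub_apply (hD : 0 < D) (hF : F 0 = 0) (hy : y ∈ Icc (0:ℝ) 1)
    (hAy : IsMaxOn (· * (D - F y)) (Icc 0 1) y) : 0 < y := by
  rcases hy.1.lt_or_eq with hpos | rfl
  · exact hpos
  · exact absurd (eq_one_of_isMaxOn_mul hAy hy.2 (by linarith)) zero_ne_one

theorem apply_le_of_isMaxOn_mul_sub_apply (hD : 0 < D) (hF : F 0 = 0) (hy : y ∈ Icc (0:ℝ) 1)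
    (hAy : IsMaxOn (· * (D - F y)) (Icc 0 1) y) : F y ≤ D :=
  not_lt.1 fun h => (pos_of_isMaxOn_mul_sub_apply hD hF hy hAy).ne'
    (eq_zero_of_isMaxOn_mul hAy hy.1 (by linarith))

theorem le_apply_of_isMaxOn_mul_sub_apply (hy : y < 1)
    (hAy : IsMaxOn (· * (D - F y)) (Icc 0 1) y) : D ≤ F y :=
  not_lt.1 fun h => hy.ne (eq_one_of_isMaxOn_mul hAy hy.le (by linarith))

theorem apply_eq_of_isMaxOn_mul_sub_apply (hD : 0 < D) (hF : F 0 = 0) (hy : y ∈ Icc (0:ℝ) 1)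
    (hAy : IsMaxOn (· * (D - F y)) (Icc 0 1) y) (h1 : D ≤ F 1) : F y = D := by
  refine le_antisymm (apply_le_of_isMaxOn_mul_sub_apply hD hF hy hAy) ?_
  rcases hy.2.lt_or_eq with hlt | rfl
  · exact le_apply_of_isMaxOn_mul_sub_apply hlt hAy
  · exact h1

theorem eq_one_of_isMaxOn_mul_sub_apply (hFm : Monotone F) (hy : y ≤ 1)
    (hAy : IsMaxOn (· * (D - F y)) (Icc 0 1) y) (h1 : F 1 < D) : y = 1 := by
  by_contra hne
  linarith [le_apply_of_isMaxOn_mul_sub_apply (hy.lt_of_ne hne) hAy, hFm hy]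

end Guesses

def lieProb (D0 D1 : ℝ) (μ0 μ1 : Measure ℝ) (T : ℝ) : ℝ :=
  D0 * μ0.real (Iio T) + D1 * μ1.real (Iio T)

section LieProb

variable {D0 D1 : ℝ} {μ0 μ1 : Measure ℝ}

theorem lieProb_monotone [IsFiniteMeasure μ0] [IsFiniteMeasure μ1] (hD0 : 0 ≤ D0)
    (hD1 : 0 ≤ D1) : Monotone (lieProb D0 D1 μ0 μ1) := fun _ _ h => by
  unfold lieProb
  gcongr <;> finiteness

theorem lieProb_eq_zero (hμ0 : μ0 (Iic 0) = 0) (hμ1 : μ1 (Iic 0) = 0) {T : ℝ} (hT : T ≤ 0) :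
    lieProb D0 D1 μ0 μ1 T = 0 := by
  have hsub : Iio T ⊆ Iic 0 := fun _ h => (le_of_lt h).trans hT
  simp [lieProb, Measure.real, measure_mono_null hsub hμ0, measure_mono_null hsub hμ1]

end LieProb

theorem identity_payment_continuous_valuations_BNE_general
    (D0 D1 : ℝ) (hD1 : 0 < D1) (hD : D1 < D0)
    (μ0 μ1 : Measure ℝ) [IsProbabilityMeasure μ0] [IsProbabilityMeasure μ1]
    [NullSingletonClass μ0] [NullSingletonClass μ1]
    (hμ0 : μ0 (Set.Iic (0:ℝ)) = 0) (hμ1 : μ1 (Set.Iic (0:ℝ)) = 0)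
    (σ0 σ1 : ℝ → ℝ)
    (hσ0r : ∀ ρ : ℝ, σ0 ρ ∈ Set.Icc (0:ℝ) 1)
    (hσ1r : ∀ ρ : ℝ, σ1 ρ ∈ Set.Icc (0:ℝ) 1)
    (x y : ℝ) (hx : x ∈ Set.Icc (0:ℝ) 1) (hy : y ∈ Set.Icc (0:ℝ) 1)
    -- (i) each B agent's report is a best response
    (hB : ∀ ρ : ℝ, 0 < ρ →
      (∀ p' ∈ Set.Icc (0:ℝ) 1,
        p' * (ρ - x) + (1 - p') * (y - 1) ≤ σ0 ρ * (ρ - x) + (1 - σ0 ρ) * (y - 1)) ∧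
      (∀ q' ∈ Set.Icc (0:ℝ) 1,
        q' * (ρ - y) + (1 - q') * (x - 1) ≤ σ1 ρ * (ρ - y) + (1 - σ1 ρ) * (x - 1)))
    -- (ii) A's guesses (x, y) are a best response
    (hA : ∀ x' ∈ Set.Icc (0:ℝ) 1, ∀ y' ∈ Set.Icc (0:ℝ) 1,
      x' * D0 * (∫ ρ, σ0 ρ ∂μ0) + (1 - x') * D1 * (∫ ρ, (1 - σ1 ρ) ∂μ1)
          + y' * D1 * (∫ ρ, σ1 ρ ∂μ1) + (1 - y') * D0 * (∫ ρ, (1 - σ0 ρ) ∂μ0)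
        ≤ x * D0 * (∫ ρ, σ0 ρ ∂μ0) + (1 - x) * D1 * (∫ ρ, (1 - σ1 ρ) ∂μ1)
          + y * D1 * (∫ ρ, σ1 ρ ∂μ1) + (1 - y) * D0 * (∫ ρ, (1 - σ0 ρ) ∂μ0)) :
    x = 1 ∧
    (D1 ≤ D0 * (μ0 (Set.Iio 1)).toReal + D1 * (μ1 (Set.Iio 1)).toReal →
      D0 * (μ0 (Set.Iio y)).toReal + D1 * (μ1 (Set.Iio y)).toReal = D1) ∧
    (D0 * (μ0 (Set.Iio 1)).toReal + D1 * (μ1 (Set.Iio 1)).toReal < D1 → y = 1) ∧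
    (∀ ρ : ℝ, 0 < ρ →
      (y < ρ → σ0 ρ = 1 ∧ σ1 ρ = 1) ∧ (ρ < y → σ0 ρ = 0 ∧ σ1 ρ = 0)) := by
  have h0 : IsThresholdStrategy σ0 (x + y - 1) :=
    isThresholdStrategy_of_bestResponse hσ0r fun ρ hρ => (hB ρ hρ).1
  have h1 : IsThresholdStrategy σ1 (x + y - 1) := by
    simpa only [add_comm y x] using
      isThresholdStrategy_of_bestResponse hσ1r fun ρ hρ => (hB ρ hρ).2
  set F := lieProb D0 D1 μ0 μ1
  have hF0 : ∀ T ≤ 0, F T = 0 := fun _ => lieProb_eq_zero hμ0 hμ1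
  rw [h0.integral_eq hμ0, h1.integral_eq hμ1, h0.integral_one_sub_eq hμ0,
    h1.integral_one_sub_eq hμ1] at hA
  have hAx : IsMaxOn (· * (D0 - F (x + y - 1))) (Icc 0 1) x :=
    isMaxOn_iff.2 fun x' hx' => by simp only [F, lieProb]; linarith [hA x' hx' y hy]
  have hAy : IsMaxOn (· * (D1 - F (x + y - 1))) (Icc 0 1) y :=
    isMaxOn_iff.2 fun y' hy' => by simp only [F, lieProb]; linarith [hA x hx y' hy']
  obtain rfl : x = 1 := eq_one_of_isMaxOn_guesses hD1 hD hF0 hx.2 hy.1 hAx hAy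
  simp only [add_sub_cancel_left] at h0 h1 hAy
  refine ⟨rfl, apply_eq_of_isMaxOn_mul_sub_apply hD1 (hF0 0 le_rfl) hy hAy,
    eq_one_of_isMaxOn_mul_sub_apply (lieProb_monotone (hD1.trans hD).le hD1.le) hy.2 hAy,
    fun ρ hρ => ⟨fun h => ⟨(h0 ρ hρ).1 h, (h1 ρ hρ).1 h⟩, fun h => ⟨(h0 ρ hρ).2 h, (h1 ρ hρ).2 h⟩⟩⟩

/-- In the identity-payment coupon game with random coupon valuations, every
Bayesian Nash equilibrium `((σ0, σ1), (x, y))` satisfies: `x = 1`; if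
`μ((−∞,1)) ≥ D1` then `μ((−∞,y)) = D1` and otherwise `y = 1` (where
`μ = D0·μ0 + D1·μ1`); and B plays a threshold strategy with threshold `y`:
agents with valuation above `y` report truthfully, agents below `y` lie. -/
theorem identity_payment_continuous_valuations_BNE
    (D0 D1 : ℝ) (hD1 : 0 < D1) (hD : D1 < D0) (hsum : D0 + D1 = 1)
    (μ0 μ1 : Measure ℝ) [IsProbabilityMeasure μ0] [IsProbabilityMeasure μ1]
    [NullSingletonClass μ0] [NullSingletonClass μ1]
    (hμ0 : μ0 (Set.Iic (0:ℝ)) = 0) (hμ1 : μ1 (Set.Iic (0:ℝ)) = 0)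
    (σ0 σ1 : ℝ → ℝ) (hσ0m : Measurable σ0) (hσ1m : Measurable σ1)
    (hσ0r : ∀ ρ : ℝ, σ0 ρ ∈ Set.Icc (0:ℝ) 1)
    (hσ1r : ∀ ρ : ℝ, σ1 ρ ∈ Set.Icc (0:ℝ) 1)
    (x y : ℝ) (hx : x ∈ Set.Icc (0:ℝ) 1) (hy : y ∈ Set.Icc (0:ℝ) 1)
    -- (i) each B agent's report is a best response
    (hB : ∀ ρ : ℝ, 0 < ρ →
      (∀ p' ∈ Set.Icc (0:ℝ) 1,
        p' * (ρ - x) + (1 - p') * (y - 1) ≤ σ0 ρ * (ρ - x) + (1 - σ0 ρ) * (y - 1)) ∧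
      (∀ q' ∈ Set.Icc (0:ℝ) 1,
        q' * (ρ - y) + (1 - q') * (x - 1) ≤ σ1 ρ * (ρ - y) + (1 - σ1 ρ) * (x - 1)))
    -- (ii) A's guesses (x, y) are a best response
    (hA : ∀ x' ∈ Set.Icc (0:ℝ) 1, ∀ y' ∈ Set.Icc (0:ℝ) 1,
      x' * D0 * (∫ ρ, σ0 ρ ∂μ0) + (1 - x') * D1 * (∫ ρ, (1 - σ1 ρ) ∂μ1)
          + y' * D1 * (∫ ρ, σ1 ρ ∂μ1) + (1 - y') * D0 * (∫ ρ, (1 - σ0 ρ) ∂μ0)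
        ≤ x * D0 * (∫ ρ, σ0 ρ ∂μ0) + (1 - x) * D1 * (∫ ρ, (1 - σ1 ρ) ∂μ1)
          + y * D1 * (∫ ρ, σ1 ρ ∂μ1) + (1 - y) * D0 * (∫ ρ, (1 - σ0 ρ) ∂μ0)) :
    x = 1 ∧
    (D1 ≤ D0 * (μ0 (Set.Iio 1)).toReal + D1 * (μ1 (Set.Iio 1)).toReal →
      D0 * (μ0 (Set.Iio y)).toReal + D1 * (μ1 (Set.Iio y)).toReal = D1) ∧
    (D0 * (μ0 (Set.Iio 1)).toReal + D1 * (μ1 (Set.Iio 1)).toReal < D1 → y = 1) ∧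
    (∀ ρ : ℝ, 0 < ρ →
      (y < ρ → σ0 ρ = 1 ∧ σ1 ρ = 1) ∧ (ρ < y → σ0 ρ = 0 ∧ σ1 ρ = 0)) :=
  identity_payment_continuous_valuations_BNE_general D0 D1 hD1 hD μ0 μ1 hμ0 hμ1 σ0 σ1 hσ0r hσ1r x y
    hx hy hB hA
end

section
/- In the opt-out coupon game, assume D0²·M00·M10 = D1²·M01·M11, and that 0 < ρ1·M10 − ρ0·M11 < M01·M10 − M00·M11 and 0 < ρ0·M01 − ρ1·M00 < M01·M10 − M00·M11. Then in every Bayesian Nash equilibrium, B's strategy is p = q = (D0·D1·M01·M10 − D1²·M01·M11)/(D0·D1·(M01·M10 − M00·M11)) with 1/2 ≤ p < 1; that is, B's unique BNE strategy is a nondegenerate Randomized Response strategy. -/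
/-!
The coupon conditions say exactly that `(ρ0, ρ1) = (M00 u + M10 w, M01 u + M11 w)` for some
`u, w ∈ (0, 1)`. Writing `u' = x0 - y0` and `w' = y1 - x1` for the differences of A's accusation
rates, the gain of a type-0 (type-1) agent from telling the truth is then
`M00 (u - u') + M10 (w - w')` (resp. `M01 (u - u') + M11 (w - w')`). Since
`M00 M11 < M01 M10`, A never strictly gains from both accusations after the same signal, and
a case analysis of A's best responses rules out every pure strategy of either type of B.
Both types are therefore indifferent, which forces `(u', w') = (u, w)`; then A mixes between
one accusation and opting out after each signal, so A is indifferent there as well. These two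
indifference equations are linear in `p, q`, the balance condition `D0² M00 M10 = D1² M01 M11`
makes their solution satisfy `q = p`, and `1/2 ≤ p` is AM–GM.
-/

/-- Bayesian Nash equilibrium of the opt-out coupon game: `(p, q)` is B's
strategy, `(x0, x1)` (resp. `(y0, y1)`) are A's accusation probabilities after
signal 0 (resp. signal 1), the remaining probability being opting out. -/
def OptOutBNE (D0 D1 M00 M01 M10 M11 ρ0 ρ1 p q x0 x1 y0 y1 : ℝ) : Prop :=
  p ∈ Set.Icc (0:ℝ) 1 ∧ q ∈ Set.Icc (0:ℝ) 1 ∧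
  x0 ∈ Set.Icc (0:ℝ) 1 ∧ x1 ∈ Set.Icc (0:ℝ) 1 ∧
  y0 ∈ Set.Icc (0:ℝ) 1 ∧ y1 ∈ Set.Icc (0:ℝ) 1 ∧
  x0 + x1 ≤ 1 ∧ y0 + y1 ≤ 1 ∧
  -- (i) A's accusation probabilities are a best response
  (∀ x0' x1' y0' y1' : ℝ, x0' ∈ Set.Icc (0:ℝ) 1 → x1' ∈ Set.Icc (0:ℝ) 1 →
    y0' ∈ Set.Icc (0:ℝ) 1 → y1' ∈ Set.Icc (0:ℝ) 1 →
    x0' + x1' ≤ 1 → y0' + y1' ≤ 1 →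
    x0' * (D0 * p * M00 - D1 * (1 - q) * M01)
        + x1' * (-(D0 * p * M10) + D1 * (1 - q) * M11)
        + y0' * (D0 * (1 - p) * M00 - D1 * q * M01)
        + y1' * (-(D0 * (1 - p) * M10) + D1 * q * M11)
      ≤ x0 * (D0 * p * M00 - D1 * (1 - q) * M01)
        + x1 * (-(D0 * p * M10) + D1 * (1 - q) * M11)
        + y0 * (D0 * (1 - p) * M00 - D1 * q * M01)
        + y1 * (-(D0 * (1 - p) * M10) + D1 * q * M11)) ∧
  -- (ii) p is a best response for the type-0 B agent
  (∀ p' ∈ Set.Icc (0:ℝ) 1,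
    p' * (ρ0 - x0 * M00 + x1 * M10) + (1 - p') * (-(y0 * M00) + y1 * M10)
      ≤ p * (ρ0 - x0 * M00 + x1 * M10) + (1 - p) * (-(y0 * M00) + y1 * M10)) ∧
  -- (iii) q is a best response for the type-1 B agent
  (∀ q' ∈ Set.Icc (0:ℝ) 1,
    q' * (ρ1 - y1 * M11 + y0 * M01) + (1 - q') * (-(x1 * M11) + x0 * M01)
      ≤ q * (ρ1 - y1 * M11 + y0 * M01) + (1 - q) * (-(x1 * M11) + x0 * M01))

open Set

/-- A's choice after one signal: accuse type 0, accuse type 1, or opt out (the vertex `0`). -/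
structure IsTriangleMaximizer (c0 c1 x0 x1 : ℝ) : Prop where
  nonneg_left : 0 ≤ x0
  nonneg_right : 0 ≤ x1
  add_le_one : x0 + x1 ≤ 1
  le : ∀ a b : ℝ, 0 ≤ a → 0 ≤ b → a + b ≤ 1 → a * c0 + b * c1 ≤ x0 * c0 + x1 * c1

namespace IsTriangleMaximizer

variable {c0 c1 x0 x1 : ℝ}

theorem swap (h : IsTriangleMaximizer c0 c1 x0 x1) : IsTriangleMaximizer c1 c0 x1 x0 where
  nonneg_left := h.nonneg_right
  nonneg_right := h.nonneg_left
  add_le_one := by linarith [h.add_le_one]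
  le a b ha hb hab := by linarith [h.le b a hb ha (by linarith)]

theorem mul_nonneg_left (h : IsTriangleMaximizer c0 c1 x0 x1) : 0 ≤ x0 * c0 := by
  linarith [h.le 0 x1 le_rfl h.nonneg_right (by linarith [h.nonneg_left, h.add_le_one])]

theorem eq_zero_of_neg (h : IsTriangleMaximizer c0 c1 x0 x1) (hc0 : c0 < 0) : x0 = 0 :=
  le_antisymm (nonpos_of_mul_nonneg_left h.mul_nonneg_left hc0) h.nonneg_left

theorem nonneg_of_pos (h : IsTriangleMaximizer c0 c1 x0 x1) (hx0 : 0 < x0) : 0 ≤ c0 :=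
  nonneg_of_mul_nonneg_right h.mul_nonneg_left hx0

theorem eq_one_of_pos_of_neg (h : IsTriangleMaximizer c0 c1 x0 x1) (hc0 : 0 < c0)
    (hc1 : c1 < 0) : x0 = 1 := by
  have hx1 := h.swap.eq_zero_of_neg hc1
  have hcorner := h.le 1 0 zero_le_one le_rfl (by norm_num)
  rw [hx1] at hcorner
  exact le_antisymm (by linarith [h.add_le_one])
    (le_of_mul_le_mul_right (by linarith) hc0)

theorem eq_zero_of_lt_one (h : IsTriangleMaximizer c0 c1 x0 x1) (hx1 : x1 = 0)
    (hx0 : 0 < x0) (hx0' : x0 < 1) : c0 = 0 := by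
  have hcorner := h.le 1 0 zero_le_one le_rfl (by norm_num)
  rw [hx1] at hcorner
  nlinarith [h.nonneg_of_pos hx0]

end IsTriangleMaximizer

/-- `g` is the gain of the first of two pure options over the second. -/
def IsBinaryBestResponse (g p : ℝ) : Prop :=
  ∀ p' ∈ Icc (0 : ℝ) 1, p' * g ≤ p * g

namespace IsBinaryBestResponse

variable {g p : ℝ}

theorem nonneg_of_pos (h : IsBinaryBestResponse g p) (hp : 0 < p) : 0 ≤ g :=
  nonneg_of_mul_nonneg_right (by simpa using h 0 (by simp)) hp

theorem nonpos_of_lt_one (h : IsBinaryBestResponse g p) (hp : p < 1) : g ≤ 0 := by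
  nlinarith [h 1 (by simp)]

end IsBinaryBestResponse

/-- `a * M00 - b * M01` and `b * M11 - a * M10` are A's gains from accusing type 0 and type 1
after a signal that types 0 and 1 send with weights `a` and `b`. -/
theorem accusation_gains_not_both_nonneg {a b M00 M01 M10 M11 : ℝ} (ha : 0 < a) (hb : 0 < b)
    (h00 : 0 ≤ M00) (h10 : 0 ≤ M10) (hM : M00 * M11 < M01 * M10)
    (h0 : 0 ≤ a * M00 - b * M01) (h1 : 0 ≤ b * M11 - a * M10) : False := by
  have hprod : (b * M01) * (a * M10) ≤ (a * M00) * (b * M11) :=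
    mul_le_mul (by linarith) (by linarith) (by positivity) (by positivity)
  nlinarith [mul_pos ha hb]

theorem exists_coupon_repr {M00 M01 M10 M11 ρ0 ρ1 : ℝ} (hΔ : 0 < M01 * M10 - M00 * M11)
    (hc1 : 0 < ρ1 * M10 - ρ0 * M11) (hc1' : ρ1 * M10 - ρ0 * M11 < M01 * M10 - M00 * M11)
    (hc2 : 0 < ρ0 * M01 - ρ1 * M00) (hc2' : ρ0 * M01 - ρ1 * M00 < M01 * M10 - M00 * M11) :
    ∃ u w : ℝ, u ∈ Ioo 0 1 ∧ w ∈ Ioo 0 1 ∧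
      ρ0 = M00 * u + M10 * w ∧ ρ1 = M11 * w + M01 * u := by
  refine ⟨(ρ1 * M10 - ρ0 * M11) / (M01 * M10 - M00 * M11),
    (ρ0 * M01 - ρ1 * M00) / (M01 * M10 - M00 * M11),
    ⟨div_pos hc1 hΔ, (div_lt_one hΔ).2 hc1'⟩, ⟨div_pos hc2 hΔ, (div_lt_one hΔ).2 hc2'⟩, ?_, ?_⟩ <;>
  · rw [← mul_div_assoc, ← mul_div_assoc, ← add_div, eq_div_iff hΔ.ne']
    ring

structure IsOptOutGame (D0 D1 M00 M01 M10 M11 : ℝ) : Prop where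
  D0_pos : 0 < D0
  D1_pos : 0 < D1
  M00_pos : 0 < M00
  M01_pos : 0 < M01
  M10_pos : 0 < M10
  M11_pos : 0 < M11
  opt_out0 : D0 * M00 < D1 * M01
  opt_out1 : D1 * M11 < D0 * M10

namespace IsOptOutGame

variable {D0 D1 M00 M01 M10 M11 : ℝ}

theorem swap (hG : IsOptOutGame D0 D1 M00 M01 M10 M11) : IsOptOutGame D1 D0 M11 M10 M01 M00 :=
  ⟨hG.D1_pos, hG.D0_pos, hG.M11_pos, hG.M10_pos, hG.M01_pos, hG.M00_pos,
    hG.opt_out1, hG.opt_out0⟩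

theorem det_pos (hG : IsOptOutGame D0 D1 M00 M01 M10 M11) : M00 * M11 < M01 * M10 := by
  have hprod := mul_lt_mul'' hG.opt_out0 hG.opt_out1
    (mul_pos hG.D0_pos hG.M00_pos).le (mul_pos hG.D1_pos hG.M11_pos).le
  nlinarith [mul_pos hG.D0_pos hG.D1_pos]

end IsOptOutGame

namespace OptOutBNE

variable {D0 D1 M00 M01 M10 M11 ρ0 ρ1 u w p q x0 x1 y0 y1 : ℝ}

/-- Exchanging the two types of B together with the two signals. -/
theorem swap (h : OptOutBNE D0 D1 M00 M01 M10 M11 ρ0 ρ1 p q x0 x1 y0 y1) :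
    OptOutBNE D1 D0 M11 M10 M01 M00 ρ1 ρ0 q p y1 y0 x1 x0 := by
  obtain ⟨hp, hq, hx0, hx1, hy0, hy1, hx, hy, hA, hBp, hBq⟩ := h
  refine ⟨hq, hp, hy1, hy0, hx1, hx0, by linarith, by linarith, ?_, hBq, hBp⟩
  intro a1 a0 b1 b0 ha1 ha0 hb1 hb0 ha hb
  linarith [hA b0 b1 a0 a1 hb0 hb1 ha0 ha1 (by linarith) (by linarith)]

theorem signal0 (h : OptOutBNE D0 D1 M00 M01 M10 M11 ρ0 ρ1 p q x0 x1 y0 y1) :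
    IsTriangleMaximizer (D0 * p * M00 - D1 * (1 - q) * M01)
      (D1 * (1 - q) * M11 - D0 * p * M10) x0 x1 := by
  obtain ⟨-, -, hx0, hx1, hy0, hy1, hx, hy, hA, -, -⟩ := h
  refine ⟨hx0.1, hx1.1, hx, fun a b ha hb hab => ?_⟩
  linarith [hA a b y0 y1 ⟨ha, by linarith⟩ ⟨hb, by linarith⟩ hy0 hy1 hab hy]

theorem signal1 (h : OptOutBNE D0 D1 M00 M01 M10 M11 ρ0 ρ1 p q x0 x1 y0 y1) :
    IsTriangleMaximizer (D0 * (1 - p) * M00 - D1 * q * M01)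
      (D1 * q * M11 - D0 * (1 - p) * M10) y0 y1 :=
  h.swap.signal0.swap

theorem truthful0
    (h : OptOutBNE D0 D1 M00 M01 M10 M11 (M00 * u + M10 * w) (M11 * w + M01 * u)
      p q x0 x1 y0 y1) :
    IsBinaryBestResponse (M00 * (u - (x0 - y0)) + M10 * (w - (y1 - x1))) p := by
  obtain ⟨-, -, -, -, -, -, -, -, -, hBp, -⟩ := h
  intro p' hp'
  linarith [hBp p' hp']

theorem truthful1
    (h : OptOutBNE D0 D1 M00 M01 M10 M11 (M00 * u + M10 * w) (M11 * w + M01 * u)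
      p q x0 x1 y0 y1) :
    IsBinaryBestResponse (M11 * (w - (y1 - x1)) + M01 * (u - (x0 - y0))) q :=
  h.swap.truthful0

theorem p_pos (hG : IsOptOutGame D0 D1 M00 M01 M10 M11) (hu : u ∈ Ioo 0 1) (hw : w ∈ Ioo 0 1)
    (h : OptOutBNE D0 D1 M00 M01 M10 M11 (M00 * u + M10 * w) (M11 * w + M01 * u)
      p q x0 x1 y0 y1) : 0 < p := by
  refine h.1.1.lt_of_ne fun hp => ?_
  subst hp
  have hgain0 := h.truthful0.nonpos_of_lt_one zero_lt_one
  have hy := h.signal1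
  rcases h.2.1.2.lt_or_eq with hq1 | rfl
  · -- signal 0 comes from type-1 agents only, so A accuses type 1 after it
    have hD := mul_pos hG.D1_pos (sub_pos.2 hq1)
    have hx := h.signal0
    have hx0 : x0 = 0 := hx.eq_zero_of_neg (by nlinarith [hG.M01_pos])
    have hx1 : x1 = 1 :=
      hx.swap.eq_one_of_pos_of_neg (by nlinarith [hG.M11_pos]) (by nlinarith [hG.M01_pos])
    subst hx0 hx1
    nlinarith [hy.nonneg_left, hy.add_le_one, hG.M00_pos, hG.M10_pos, hu.1, hw.1]
  · -- signal 1 comes from everybody, so A opts out after it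
    have hy0 : y0 = 0 := hy.eq_zero_of_neg (by linarith [hG.opt_out0])
    have hy1 : y1 = 0 := hy.swap.eq_zero_of_neg (by linarith [hG.opt_out1])
    subst hy0 hy1
    have hgain1 := h.truthful1.nonneg_of_pos one_pos
    -- `M01 * gain0 - M00 * gain1 = (M01 * M10 - M00 * M11) * (w + x1)`
    have hdet : 0 < (M01 * M10 - M00 * M11) * (w + x1) :=
      mul_pos (sub_pos.2 hG.det_pos) (by linarith [hw.1, h.signal0.nonneg_right])
    nlinarith [hG.M00_pos, hG.M01_pos]

theorem q_pos (hG : IsOptOutGame D0 D1 M00 M01 M10 M11) (hu : u ∈ Ioo 0 1) (hw : w ∈ Ioo 0 1)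
    (h : OptOutBNE D0 D1 M00 M01 M10 M11 (M00 * u + M10 * w) (M11 * w + M01 * u)
      p q x0 x1 y0 y1) : 0 < q :=
  h.swap.p_pos hG.swap hw hu

theorem p_lt_one (hG : IsOptOutGame D0 D1 M00 M01 M10 M11) (hu : u ∈ Ioo 0 1)
    (hw : w ∈ Ioo 0 1)
    (h : OptOutBNE D0 D1 M00 M01 M10 M11 (M00 * u + M10 * w) (M11 * w + M01 * u)
      p q x0 x1 y0 y1) (hq : 0 < q) : p < 1 := by
  refine h.1.2.lt_of_ne fun hp => ?_
  subst hp
  -- signal 1 comes from type-1 agents only, so A accuses type 1 after it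
  have hx := h.signal0
  have hy := h.signal1
  have hA1 : D1 * (1 - q) * M11 - D0 * 1 * M10 < 0 := by
    nlinarith [hG.opt_out1, mul_pos (mul_pos hG.D1_pos hq) hG.M11_pos]
  have hB0 : D0 * (1 - 1) * M00 - D1 * q * M01 < 0 := by
    nlinarith [mul_pos (mul_pos hG.D1_pos hq) hG.M01_pos]
  have hx1 : x1 = 0 := hx.swap.eq_zero_of_neg hA1
  have hy0 : y0 = 0 := hy.eq_zero_of_neg hB0
  have hy1 : y1 = 1 :=
    hy.swap.eq_one_of_pos_of_neg (by nlinarith [mul_pos (mul_pos hG.D1_pos hq) hG.M11_pos]) hB0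
  subst hx1 hy0 hy1
  have hgain0 := h.truthful0.nonneg_of_pos one_pos
  rcases h.2.1.2.lt_or_eq with hq1 | rfl
  · have hgain1 := le_antisymm (h.truthful1.nonpos_of_lt_one hq1) (h.truthful1.nonneg_of_pos hq)
    have hdet : (M01 * M10 - M00 * M11) * (w - 1) < 0 :=
      mul_neg_of_pos_of_neg (sub_pos.2 hG.det_pos) (by linarith [hw.2])
    nlinarith [hG.M00_pos, hG.M01_pos]
  · have hx0 : x0 = 1 :=
      hx.eq_one_of_pos_of_neg (by nlinarith [mul_pos hG.D0_pos hG.M00_pos]) hA1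
    subst hx0
    nlinarith [hG.M00_pos, hG.M10_pos, hu.2, hw.2]

theorem q_lt_one (hG : IsOptOutGame D0 D1 M00 M01 M10 M11) (hu : u ∈ Ioo 0 1)
    (hw : w ∈ Ioo 0 1)
    (h : OptOutBNE D0 D1 M00 M01 M10 M11 (M00 * u + M10 * w) (M11 * w + M01 * u)
      p q x0 x1 y0 y1) (hp : 0 < p) : q < 1 :=
  h.swap.p_lt_one hG.swap hw hu hp

theorem accusation_diffs_eq (hG : IsOptOutGame D0 D1 M00 M01 M10 M11)
    (h : OptOutBNE D0 D1 M00 M01 M10 M11 (M00 * u + M10 * w) (M11 * w + M01 * u)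
      p q x0 x1 y0 y1) (hp : p ∈ Ioo 0 1) (hq : q ∈ Ioo 0 1) :
    x0 - y0 = u ∧ y1 - x1 = w := by
  have hgain0 := le_antisymm (h.truthful0.nonpos_of_lt_one hp.2) (h.truthful0.nonneg_of_pos hp.1)
  have hgain1 := le_antisymm (h.truthful1.nonpos_of_lt_one hq.2) (h.truthful1.nonneg_of_pos hq.1)
  have hdet := (sub_pos.2 hG.det_pos).ne'
  have hu' : (M01 * M10 - M00 * M11) * (u - (x0 - y0)) = 0 := by
    linear_combination M10 * hgain1 - M11 * hgain0
  have hw' : (M01 * M10 - M00 * M11) * (w - (y1 - x1)) = 0 := by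
    linear_combination M01 * hgain0 - M00 * hgain1
  constructor
  · linarith [(mul_eq_zero.1 hu').resolve_left hdet]
  · linarith [(mul_eq_zero.1 hw').resolve_left hdet]

theorem y0_eq_zero (hG : IsOptOutGame D0 D1 M00 M01 M10 M11) (hw : w ∈ Ioo 0 1)
    (h : OptOutBNE D0 D1 M00 M01 M10 M11 (M00 * u + M10 * w) (M11 * w + M01 * u)
      p q x0 x1 y0 y1) (hp : p ∈ Ioo 0 1) (hq : q ∈ Ioo 0 1) : y0 = 0 := by
  have hy := h.signal1
  refine le_antisymm ?_ hy.nonneg_left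
  by_contra! hy0
  have hy1 : 0 < y1 := by
    linarith [(h.accusation_diffs_eq hG hp hq).2, hw.1, h.signal0.nonneg_right]
  exact accusation_gains_not_both_nonneg (mul_pos hG.D0_pos (sub_pos.2 hp.2))
    (mul_pos hG.D1_pos hq.1) hG.M00_pos.le hG.M10_pos.le hG.det_pos
    (hy.nonneg_of_pos hy0) (hy.swap.nonneg_of_pos hy1)

theorem signal0_indifferent (hG : IsOptOutGame D0 D1 M00 M01 M10 M11) (hu : u ∈ Ioo 0 1)
    (hw : w ∈ Ioo 0 1)
    (h : OptOutBNE D0 D1 M00 M01 M10 M11 (M00 * u + M10 * w) (M11 * w + M01 * u)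
      p q x0 x1 y0 y1) (hp : p ∈ Ioo 0 1) (hq : q ∈ Ioo 0 1) :
    D0 * p * M00 - D1 * (1 - q) * M01 = 0 := by
  have hx1 : x1 = 0 := h.swap.y0_eq_zero hG.swap hu hq hp
  have hx0 : x0 = u := by
    linarith [(h.accusation_diffs_eq hG hp hq).1, h.y0_eq_zero hG hw hp hq]
  exact h.signal0.eq_zero_of_lt_one hx1 (hx0 ▸ hu.1) (hx0 ▸ hu.2)

theorem signal1_indifferent (hG : IsOptOutGame D0 D1 M00 M01 M10 M11) (hu : u ∈ Ioo 0 1)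
    (hw : w ∈ Ioo 0 1)
    (h : OptOutBNE D0 D1 M00 M01 M10 M11 (M00 * u + M10 * w) (M11 * w + M01 * u)
      p q x0 x1 y0 y1) (hp : p ∈ Ioo 0 1) (hq : q ∈ Ioo 0 1) :
    D1 * q * M11 - D0 * (1 - p) * M10 = 0 :=
  h.swap.signal0_indifferent hG.swap hw hu hq hp

end OptOutBNE

theorem two_mul_le_add_of_mul_eq_sq {a b c : ℝ} (ha : 0 ≤ a) (hb : 0 ≤ b)
    (h : a * b = c ^ 2) : 2 * c ≤ a + b := by
  nlinarith [sq_nonneg (a - b)]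

theorem randomized_response_of_indifferent {D0 D1 M00 M01 M10 M11 p q : ℝ}
    (hG : IsOptOutGame D0 D1 M00 M01 M10 M11)
    (hbal : D0 ^ 2 * M00 * M10 = D1 ^ 2 * M01 * M11)
    (h0 : D0 * p * M00 - D1 * (1 - q) * M01 = 0) (h1 : D1 * q * M11 - D0 * (1 - p) * M10 = 0) :
    p = (D0 * D1 * M01 * M10 - D1 ^ 2 * M01 * M11) / (D0 * D1 * (M01 * M10 - M00 * M11)) ∧
      q = p ∧ 1 / 2 ≤ p := by
  have hΔ := sub_pos.2 hG.det_pos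
  obtain ⟨hD0, hD1, h00, h01, h10, h11, -, -⟩ := hG
  have hp : D0 * p * (M01 * M10 - M00 * M11) = D0 * M01 * M10 - D1 * M01 * M11 := by
    linear_combination M01 * h1 - M11 * h0
  have hq : D1 * q * (M01 * M10 - M00 * M11) = D1 * M01 * M10 - D0 * M00 * M10 := by
    linear_combination M10 * h0 - M00 * h1
  have hden : D0 * D1 * (M01 * M10 - M00 * M11) ≠ 0 := by positivity
  refine ⟨?_, ?_, ?_⟩
  · rw [eq_div_iff hden]
    linear_combination D1 * hp
  · refine mul_right_cancel₀ hden ?_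
    linear_combination D0 * hq - D1 * hp - hbal
  · have hamgm := two_mul_le_add_of_mul_eq_sq (a := D0 * M01 * M10) (b := D0 * M00 * M11)
      (c := D1 * M01 * M11) (by positivity) (by positivity)
      (by linear_combination M01 * M11 * hbal)
    nlinarith [mul_pos hD0 hΔ]

theorem optout_BNE_randomized_response_general
    (D0 D1 M00 M01 M10 M11 ρ0 ρ1 : ℝ)
    (hD1 : 0 < D1)
    (h00 : 0 < M00) (h01 : 0 < M01) (h10 : 0 < M10) (h11 : 0 < M11)
    (hopt0 : D0 * M00 < D1 * M01) (hopt1 : D1 * M11 < D0 * M10)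
    (hbal : D0 ^ 2 * M00 * M10 = D1 ^ 2 * M01 * M11)
    (hc1 : 0 < ρ1 * M10 - ρ0 * M11)
    (hc1' : ρ1 * M10 - ρ0 * M11 < M01 * M10 - M00 * M11)
    (hc2 : 0 < ρ0 * M01 - ρ1 * M00)
    (hc2' : ρ0 * M01 - ρ1 * M00 < M01 * M10 - M00 * M11) :
    ∀ p q x0 x1 y0 y1 : ℝ,
      OptOutBNE D0 D1 M00 M01 M10 M11 ρ0 ρ1 p q x0 x1 y0 y1 →
      p = (D0 * D1 * M01 * M10 - D1 ^ 2 * M01 * M11) /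
            (D0 * D1 * (M01 * M10 - M00 * M11)) ∧
      q = p ∧ 1/2 ≤ p ∧ p < 1 := by
  have hD0 : 0 < D0 := pos_of_mul_pos_left ((mul_pos hD1 h11).trans hopt1) h10.le
  have hG : IsOptOutGame D0 D1 M00 M01 M10 M11 :=
    ⟨hD0, hD1, h00, h01, h10, h11, hopt0, hopt1⟩
  obtain ⟨u, w, hu, hw, rfl, rfl⟩ :=
    exists_coupon_repr (sub_pos.2 hG.det_pos) hc1 hc1' hc2 hc2'
  intro p q x0 x1 y0 y1 h
  have hp0 := h.p_pos hG hu hw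
  have hq0 := h.q_pos hG hu hw
  have hp : p ∈ Ioo 0 1 := ⟨hp0, h.p_lt_one hG hu hw hq0⟩
  have hq : q ∈ Ioo 0 1 := ⟨hq0, h.q_lt_one hG hu hw hp0⟩
  obtain ⟨hp_eq, hqp, hhalf⟩ := randomized_response_of_indifferent hG hbal
    (h.signal0_indifferent hG hu hw hp hq) (h.signal1_indifferent hG hu hw hp hq)
  exact ⟨hp_eq, hqp, hhalf, hp.2⟩

/-- In the opt-out coupon game with `D0²·M00·M10 = D1²·M01·M11` and the
feasibility condition of the interior equilibrium holding strictly, in every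
Bayesian Nash equilibrium B's unique strategy is a nondegenerate Randomized
Response strategy. -/
theorem optout_BNE_randomized_response
    (D0 D1 M00 M01 M10 M11 ρ0 ρ1 : ℝ)
    (hD1 : 0 < D1) (hD : D1 ≤ D0) (hsum : D0 + D1 = 1)
    (h00 : 0 < M00) (h01 : 0 < M01) (h10 : 0 < M10) (h11 : 0 < M11)
    (hopt0 : D0 * M00 < D1 * M01) (hopt1 : D1 * M11 < D0 * M10)
    (hρ0 : 0 < ρ0) (hρ1 : 0 < ρ1)
    (hbal : D0 ^ 2 * M00 * M10 = D1 ^ 2 * M01 * M11)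
    (hc1 : 0 < ρ1 * M10 - ρ0 * M11)
    (hc1' : ρ1 * M10 - ρ0 * M11 < M01 * M10 - M00 * M11)
    (hc2 : 0 < ρ0 * M01 - ρ1 * M00)
    (hc2' : ρ0 * M01 - ρ1 * M00 < M01 * M10 - M00 * M11) :
    ∀ p q x0 x1 y0 y1 : ℝ,
      OptOutBNE D0 D1 M00 M01 M10 M11 ρ0 ρ1 p q x0 x1 y0 y1 →
      p = (D0 * D1 * M01 * M10 - D1 ^ 2 * M01 * M11) /
            (D0 * D1 * (M01 * M10 - M00 * M11)) ∧
      q = p ∧ 1/2 ≤ p ∧ p < 1 :=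
  optout_BNE_randomized_response_general D0 D1 M00 M01 M10 M11 ρ0 ρ1 hD1 h00 h01 h10 h11 hopt0 hopt1
    hbal hc1 hc1' hc2 hc2'
end

section
/- In the opt-out coupon game, every Bayesian Nash equilibrium (p, q, x0, x1, y0, y1) satisfies D0·M00·p ≥ D1·M01·(1−q) or D0·M10·(1−p) ≤ D1·M11·q. (In ratio form: either p/(1−q) ≥ D1·M01/(D0·M00), or (1−p)/q ≤ D1·M11/(D0·M10).) -/
/-!
If both inequalities failed, A's expected payoff from accusing type 0 after signal 0, and from
accusing type 1 after signal 1, would be strictly negative, so a best-responding A never makes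
these accusations. Then a truthful signal costs B nothing and earns the positive coupon, so both
types of B tell the truth (`p = q = 1`), and the first failed inequality reads
`D0 * M00 < 0`, which is absurd.
-/

lemma eq_one_of_mix_le_of_lt {a b p : ℝ} (hp : p ≤ 1) (hba : b < a)
    (h : a ≤ p * a + (1 - p) * b) : p = 1 := by
  by_contra hne
  have hlt : 0 < 1 - p := sub_pos.2 (lt_of_le_of_ne hp hne)
  nlinarith [mul_pos hlt (sub_pos.2 hba)]

namespace OptOutBNE

variable {D0 D1 M00 M01 M10 M11 ρ0 ρ1 p q x0 x1 y0 y1 : ℝ}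

lemma accuse_zero_after_zero_eq_zero
    (h : OptOutBNE D0 D1 M00 M01 M10 M11 ρ0 ρ1 p q x0 x1 y0 y1)
    (hc : D0 * M00 * p < D1 * M01 * (1 - q)) : x0 = 0 := by
  obtain ⟨-, -, hx0, hx1, hy0, hy1, hxs, hys, hA, -⟩ := h
  have hopt := hA 0 x1 y0 y1 ⟨le_rfl, zero_le_one⟩ hx1 hy0 hy1 (by linarith [hx0.1]) hys
  have hx0_nonpos : x0 ≤ 0 :=
    nonpos_of_mul_nonneg_left (b := D0 * p * M00 - D1 * (1 - q) * M01)
      (by linarith) (by linarith)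
  exact le_antisymm hx0_nonpos hx0.1

lemma accuse_one_after_one_eq_zero
    (h : OptOutBNE D0 D1 M00 M01 M10 M11 ρ0 ρ1 p q x0 x1 y0 y1)
    (hc : D1 * M11 * q < D0 * M10 * (1 - p)) : y1 = 0 := by
  obtain ⟨-, -, hx0, hx1, hy0, hy1, hxs, hys, hA, -⟩ := h
  have hopt := hA x0 x1 y0 0 hx0 hx1 hy0 ⟨le_rfl, zero_le_one⟩ hxs (by linarith [hy1.1])
  have hy1_nonpos : y1 ≤ 0 :=
    nonpos_of_mul_nonneg_left (b := -(D0 * (1 - p) * M10) + D1 * q * M11)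
      (by linarith) (by linarith)
  exact le_antisymm hy1_nonpos hy1.1

lemma truthful_zero_eq_one
    (h : OptOutBNE D0 D1 M00 M01 M10 M11 ρ0 ρ1 p q x0 x1 y0 y1)
    (hρ0 : 0 < ρ0) (h00 : 0 < M00) (h10 : 0 < M10) (hx0 : x0 = 0) (hy1 : y1 = 0) :
    p = 1 := by
  obtain ⟨hp, -, -, hx1, hy0, -, -, -, -, hBp, -⟩ := h
  refine eq_one_of_mix_le_of_lt hp.2 ?_ (hBp 1 ⟨zero_le_one, le_rfl⟩ |>.trans_eq' (by ring))
  subst hx0 hy1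
  linarith [mul_nonneg hx1.1 h10.le, mul_nonneg hy0.1 h00.le]

lemma truthful_one_eq_one
    (h : OptOutBNE D0 D1 M00 M01 M10 M11 ρ0 ρ1 p q x0 x1 y0 y1)
    (hρ1 : 0 < ρ1) (h01 : 0 < M01) (h11 : 0 < M11) (hx0 : x0 = 0) (hy1 : y1 = 0) :
    q = 1 := by
  obtain ⟨-, hq, -, hx1, hy0, -, -, -, -, -, hBq⟩ := h
  refine eq_one_of_mix_le_of_lt hq.2 ?_ (hBq 1 ⟨zero_le_one, le_rfl⟩ |>.trans_eq' (by ring))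
  subst hx0 hy1
  linarith [mul_nonneg hx1.1 h11.le, mul_nonneg hy0.1 h01.le]

end OptOutBNE

theorem optout_BNE_ratio_condition_general
    (D0 D1 M00 M01 M10 M11 ρ0 ρ1 : ℝ)
    (hD1 : 0 < D1) (hD : D1 ≤ D0)
    (h00 : 0 < M00) (h01 : 0 < M01) (h10 : 0 < M10) (h11 : 0 < M11)
    (hρ0 : 0 < ρ0) (hρ1 : 0 < ρ1) :
    ∀ p q x0 x1 y0 y1 : ℝ,
      OptOutBNE D0 D1 M00 M01 M10 M11 ρ0 ρ1 p q x0 x1 y0 y1 →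
      D1 * M01 * (1 - q) ≤ D0 * M00 * p ∨ D0 * M10 * (1 - p) ≤ D1 * M11 * q := by
  intro p q x0 x1 y0 y1 hBNE
  by_contra! ⟨h0, h1⟩
  have hx0 := hBNE.accuse_zero_after_zero_eq_zero h0
  have hy1 := hBNE.accuse_one_after_one_eq_zero h1
  obtain rfl := hBNE.truthful_zero_eq_one hρ0 h00 h10 hx0 hy1
  obtain rfl := hBNE.truthful_one_eq_one hρ1 h01 h11 hx0 hy1
  linarith [mul_pos (hD1.trans_le hD) h00]

/-- In the opt-out coupon game, every Bayesian Nash equilibrium satisfies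
`D0·M00·p ≥ D1·M01·(1−q)` or `D0·M10·(1−p) ≤ D1·M11·q`. -/
theorem optout_BNE_ratio_condition
    (D0 D1 M00 M01 M10 M11 ρ0 ρ1 : ℝ)
    (hD1 : 0 < D1) (hD : D1 ≤ D0) (hsum : D0 + D1 = 1)
    (h00 : 0 < M00) (h01 : 0 < M01) (h10 : 0 < M10) (h11 : 0 < M11)
    (hopt0 : D0 * M00 < D1 * M01) (hopt1 : D1 * M11 < D0 * M10)
    (hρ0 : 0 < ρ0) (hρ1 : 0 < ρ1) :
    ∀ p q x0 x1 y0 y1 : ℝ,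
      OptOutBNE D0 D1 M00 M01 M10 M11 ρ0 ρ1 p q x0 x1 y0 y1 →
      D1 * M01 * (1 - q) ≤ D0 * M00 * p ∨ D0 * M10 * (1 - p) ≤ D1 * M11 * q :=
  optout_BNE_ratio_condition_general D0 D1 M00 M01 M10 M11 ρ0 ρ1 hD1 hD h00 h01 h10 h11 hρ0 hρ1
end

section
/- Let M00, M01, M10, M11 > 0 with M00·M11 < M01·M10, let Δ := M01·M10 − M00·M11, and let ρ0, ρ1 > 0. If ρ1·M10 − ρ0·M11 ≤ Δ and ρ0·M01 − ρ1·M00 ≤ Δ, then ρ0 ≤ M00 + M10 and ρ1 ≤ M01 + M11. -/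
/-! With `Δ = M01·M10 − M00·M11 > 0`, both `ρ0·Δ` and `ρ1·Δ` are combinations with positive
coefficients of the two feasibility slacks `ρ1·M10 − ρ0·M11` and `ρ0·M01 − ρ1·M00`:
`ρ0·Δ = M00·(ρ1·M10 − ρ0·M11) + M10·(ρ0·M01 − ρ1·M00)` and
`ρ1·Δ = M01·(ρ1·M10 − ρ0·M11) + M11·(ρ0·M01 − ρ1·M00)`.
Bounding each slack by `Δ` and cancelling `Δ` gives the claim. -/

theorem le_add_of_mul_eq_add_mul_of_le {K : Type*} [Semiring K] [LinearOrder K]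
    [IsStrictOrderedRing K] {ρ a b A B Δ : K} (hΔ : 0 < Δ) (ha : 0 ≤ a) (hb : 0 ≤ b)
    (hA : A ≤ Δ) (hB : B ≤ Δ) (h : ρ * Δ = a * A + b * B) : ρ ≤ a + b := by
  refine le_of_mul_le_mul_right ?_ hΔ
  calc ρ * Δ = a * A + b * B := h
    _ ≤ a * Δ + b * Δ :=
      add_le_add (mul_le_mul_of_nonneg_left hA ha) (mul_le_mul_of_nonneg_left hB hb)
    _ = (a + b) * Δ := (add_mul a b Δ).symm

theorem optout_feasibility_excludes_truthful_general
    (M00 M01 M10 M11 ρ0 ρ1 : ℝ)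
    (h00 : 0 < M00) (h01 : 0 < M01) (h10 : 0 < M10) (h11 : 0 < M11)
    (hΔ : M00 * M11 < M01 * M10)
    (hc1 : ρ1 * M10 - ρ0 * M11 ≤ M01 * M10 - M00 * M11)
    (hc2 : ρ0 * M01 - ρ1 * M00 ≤ M01 * M10 - M00 * M11) :
    ρ0 ≤ M00 + M10 ∧ ρ1 ≤ M01 + M11 := by
  have hΔpos : 0 < M01 * M10 - M00 * M11 := sub_pos.mpr hΔ
  exact ⟨le_add_of_mul_eq_add_mul_of_le hΔpos h00.le h10.le hc1 hc2 (by ring),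
    le_add_of_mul_eq_add_mul_of_le hΔpos h01.le h11.le hc1 hc2 (by ring)⟩

/-- If `ρ1·M10 − ρ0·M11 ≤ Δ` and `ρ0·M01 − ρ1·M00 ≤ Δ` where
`Δ = M01·M10 − M00·M11 > 0`, then `ρ0 ≤ M00 + M10` and `ρ1 ≤ M01 + M11`. -/
theorem optout_feasibility_excludes_truthful
    (M00 M01 M10 M11 ρ0 ρ1 : ℝ)
    (h00 : 0 < M00) (h01 : 0 < M01) (h10 : 0 < M10) (h11 : 0 < M11)
    (hΔ : M00 * M11 < M01 * M10)
    (hρ0 : 0 < ρ0) (hρ1 : 0 < ρ1)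
    (hc1 : ρ1 * M10 - ρ0 * M11 ≤ M01 * M10 - M00 * M11)
    (hc2 : ρ0 * M01 - ρ1 * M00 ≤ M01 * M10 - M00 * M11) :
    ρ0 ≤ M00 + M10 ∧ ρ1 ≤ M01 + M11 :=
  optout_feasibility_excludes_truthful_general M00 M01 M10 M11 ρ0 ρ1 h00 h01 h10 h11 hΔ hc1 hc2
end

section
/- In the opt-out coupon game, assume 0 ≤ ρ1·M10 − ρ0·M11 ≤ Δ and 0 ≤ ρ0·M01 − ρ1·M00 ≤ Δ, where Δ := M01·M10 − M00·M11 (> 0). Then the strategy profile with x0 = (M10·ρ1 − M11·ρ0)/Δ, x1 = 0, y0 = 0, y1 = (M01·ρ0 − M00·ρ1)/Δ, p = D1·M01·(D0·M10 − D1·M11)/(D0·D1·Δ), q = D0·M10·(D1·M01 − D0·M00)/(D0·D1·Δ) is a Bayesian Nash equilibrium; moreover p, q ∈ (0,1). -/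
/-!
A plays only the two accusations that match the signal (`x0` and `y1`), with weights chosen
so that each type of B is indifferent between its two signals; B's truth-telling
probabilities are chosen so that A is indifferent between these two accusations and opting
out. The two mismatched accusations then have expected gain `-(D0 M10 - D1 M11)` and
`-(D1 M01 - D0 M00)`, negative because with no signal opting out is strictly better, so A
cannot gain by deviating either.
-/

noncomputable section

namespace OptOut

def det (M00 M01 M10 M11 : ℝ) : ℝ := M01 * M10 - M00 * M11

def truthP (D0 D1 M00 M01 M10 M11 : ℝ) : ℝ :=
  D1 * M01 * (D0 * M10 - D1 * M11) / (D0 * D1 * det M00 M01 M10 M11)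

def truthQ (D0 D1 M00 M01 M10 M11 : ℝ) : ℝ :=
  D0 * M10 * (D1 * M01 - D0 * M00) / (D0 * D1 * det M00 M01 M10 M11)

def accuseX0 (M00 M01 M10 M11 ρ0 ρ1 : ℝ) : ℝ := (M10 * ρ1 - M11 * ρ0) / det M00 M01 M10 M11

def accuseY1 (M00 M01 M10 M11 ρ0 ρ1 : ℝ) : ℝ := (M01 * ρ0 - M00 * ρ1) / det M00 M01 M10 M11

theorem optOutBNE_of_indifferent {D0 D1 M00 M01 M10 M11 ρ0 ρ1 p q x0 y1 : ℝ}
    (hp : p ∈ Set.Icc (0 : ℝ) 1) (hq : q ∈ Set.Icc (0 : ℝ) 1)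
    (hx0 : x0 ∈ Set.Icc (0 : ℝ) 1) (hy1 : y1 ∈ Set.Icc (0 : ℝ) 1)
    (hA0 : D0 * p * M00 - D1 * (1 - q) * M01 = 0)
    (hA1 : -(D0 * p * M10) + D1 * (1 - q) * M11 ≤ 0)
    (hA2 : D0 * (1 - p) * M00 - D1 * q * M01 ≤ 0)
    (hA3 : -(D0 * (1 - p) * M10) + D1 * q * M11 = 0)
    (hB0 : ρ0 - x0 * M00 = y1 * M10) (hB1 : ρ1 - y1 * M11 = x0 * M01) :
    OptOutBNE D0 D1 M00 M01 M10 M11 ρ0 ρ1 p q x0 0 0 y1 := by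
  refine ⟨hp, hq, hx0, ⟨le_rfl, zero_le_one⟩, ⟨le_rfl, zero_le_one⟩, hy1,
    by linarith [hx0.2], by linarith [hy1.2], ?_, ?_, ?_⟩
  · intro x0' x1' y0' y1' _ hx1' hy0' _ _ _
    rw [hA0, hA3]
    linarith [mul_nonpos_of_nonneg_of_nonpos hx1'.1 hA1,
      mul_nonpos_of_nonneg_of_nonpos hy0'.1 hA2]
  · intro p' _
    exact le_of_eq (by linear_combination (p' - p) * hB0)
  · intro q' _
    exact le_of_eq (by linear_combination (q' - q) * hB1)

section Formulas

variable {D0 D1 M00 M01 M10 M11 ρ0 ρ1 : ℝ}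

theorem det_pos (hD0 : 0 < D0) (hD1 : 0 < D1) (h00 : 0 ≤ M00) (h11 : 0 ≤ M11)
    (hopt0 : D0 * M00 < D1 * M01) (hopt1 : D1 * M11 < D0 * M10) :
    0 < det M00 M01 M10 M11 := by
  have h : D0 * D1 * (M00 * M11) < D0 * D1 * (M01 * M10) := by
    linarith [mul_lt_mul'' hopt0 hopt1 (by positivity) (by positivity)]
  unfold det
  linarith [lt_of_mul_lt_mul_left h (by positivity)]

theorem one_sub_truthP (hD0 : D0 ≠ 0) (hD1 : D1 ≠ 0) (hΔ : det M00 M01 M10 M11 ≠ 0) :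
    1 - truthP D0 D1 M00 M01 M10 M11 =
      D1 * M11 * (D1 * M01 - D0 * M00) / (D0 * D1 * det M00 M01 M10 M11) := by
  unfold truthP
  field_simp
  unfold det
  ring

theorem one_sub_truthQ (hD0 : D0 ≠ 0) (hD1 : D1 ≠ 0) (hΔ : det M00 M01 M10 M11 ≠ 0) :
    1 - truthQ D0 D1 M00 M01 M10 M11 =
      D0 * M00 * (D0 * M10 - D1 * M11) / (D0 * D1 * det M00 M01 M10 M11) := by
  unfold truthQ
  field_simp
  unfold det
  ring

theorem truthP_mem_Ioo (hD0 : 0 < D0) (hD1 : 0 < D1) (h00 : 0 < M00) (h01 : 0 < M01)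
    (h11 : 0 < M11) (hopt0 : D0 * M00 < D1 * M01) (hopt1 : D1 * M11 < D0 * M10) :
    truthP D0 D1 M00 M01 M10 M11 ∈ Set.Ioo 0 1 := by
  have hΔ := det_pos hD0 hD1 h00.le h11.le hopt0 hopt1
  have hden : 0 < D0 * D1 * det M00 M01 M10 M11 := by positivity
  have hpos : 0 < truthP D0 D1 M00 M01 M10 M11 :=
    div_pos (mul_pos (mul_pos hD1 h01) (sub_pos.mpr hopt1)) hden
  have hcompl : 0 < 1 - truthP D0 D1 M00 M01 M10 M11 := by
    rw [one_sub_truthP hD0.ne' hD1.ne' hΔ.ne']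
    exact div_pos (mul_pos (mul_pos hD1 h11) (sub_pos.mpr hopt0)) hden
  exact ⟨hpos, by linarith⟩

theorem truthQ_mem_Ioo (hD0 : 0 < D0) (hD1 : 0 < D1) (h00 : 0 < M00) (h10 : 0 < M10)
    (h11 : 0 < M11) (hopt0 : D0 * M00 < D1 * M01) (hopt1 : D1 * M11 < D0 * M10) :
    truthQ D0 D1 M00 M01 M10 M11 ∈ Set.Ioo 0 1 := by
  have hΔ := det_pos hD0 hD1 h00.le h11.le hopt0 hopt1
  have hden : 0 < D0 * D1 * det M00 M01 M10 M11 := by positivity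
  have hpos : 0 < truthQ D0 D1 M00 M01 M10 M11 :=
    div_pos (mul_pos (mul_pos hD0 h10) (sub_pos.mpr hopt0)) hden
  have hcompl : 0 < 1 - truthQ D0 D1 M00 M01 M10 M11 := by
    rw [one_sub_truthQ hD0.ne' hD1.ne' hΔ.ne']
    exact div_pos (mul_pos (mul_pos hD0 h00) (sub_pos.mpr hopt1)) hden
  exact ⟨hpos, by linarith⟩

theorem coeff_x0_eq_zero (hD0 : D0 ≠ 0) (hD1 : D1 ≠ 0) (hΔ : det M00 M01 M10 M11 ≠ 0) :
    D0 * truthP D0 D1 M00 M01 M10 M11 * M00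
      - D1 * (1 - truthQ D0 D1 M00 M01 M10 M11) * M01 = 0 := by
  rw [one_sub_truthQ hD0 hD1 hΔ, truthP]
  ring

theorem coeff_y1_eq_zero (hD0 : D0 ≠ 0) (hD1 : D1 ≠ 0) (hΔ : det M00 M01 M10 M11 ≠ 0) :
    -(D0 * (1 - truthP D0 D1 M00 M01 M10 M11) * M10)
      + D1 * truthQ D0 D1 M00 M01 M10 M11 * M11 = 0 := by
  rw [one_sub_truthP hD0 hD1 hΔ, truthQ]
  ring

theorem coeff_x1_eq (hD0 : D0 ≠ 0) (hD1 : D1 ≠ 0) (hΔ : det M00 M01 M10 M11 ≠ 0) :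
    -(D0 * truthP D0 D1 M00 M01 M10 M11 * M10)
      + D1 * (1 - truthQ D0 D1 M00 M01 M10 M11) * M11 = -(D0 * M10 - D1 * M11) := by
  rw [one_sub_truthQ hD0 hD1 hΔ, truthP]
  field_simp
  unfold det
  ring

theorem coeff_y0_eq (hD0 : D0 ≠ 0) (hD1 : D1 ≠ 0) (hΔ : det M00 M01 M10 M11 ≠ 0) :
    D0 * (1 - truthP D0 D1 M00 M01 M10 M11) * M00
      - D1 * truthQ D0 D1 M00 M01 M10 M11 * M01 = -(D1 * M01 - D0 * M00) := by
  rw [one_sub_truthP hD0 hD1 hΔ, truthQ]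
  field_simp
  unfold det
  ring

theorem sub_accuseX0_mul (hΔ : det M00 M01 M10 M11 ≠ 0) :
    ρ0 - accuseX0 M00 M01 M10 M11 ρ0 ρ1 * M00 = accuseY1 M00 M01 M10 M11 ρ0 ρ1 * M10 := by
  unfold accuseX0 accuseY1
  field_simp
  unfold det
  ring

theorem sub_accuseY1_mul (hΔ : det M00 M01 M10 M11 ≠ 0) :
    ρ1 - accuseY1 M00 M01 M10 M11 ρ0 ρ1 * M11 = accuseX0 M00 M01 M10 M11 ρ0 ρ1 * M01 := by
  unfold accuseX0 accuseY1
  field_simp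
  unfold det
  ring

theorem accuseX0_mem_Icc (hΔ : 0 < det M00 M01 M10 M11) (hc : 0 ≤ ρ1 * M10 - ρ0 * M11)
    (hc' : ρ1 * M10 - ρ0 * M11 ≤ det M00 M01 M10 M11) :
    accuseX0 M00 M01 M10 M11 ρ0 ρ1 ∈ Set.Icc 0 1 := by
  rw [accuseX0, mul_comm M10, mul_comm M11]
  exact ⟨div_nonneg hc hΔ.le, div_le_one_of_le₀ hc' hΔ.le⟩

theorem accuseY1_mem_Icc (hΔ : 0 < det M00 M01 M10 M11) (hc : 0 ≤ ρ0 * M01 - ρ1 * M00)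
    (hc' : ρ0 * M01 - ρ1 * M00 ≤ det M00 M01 M10 M11) :
    accuseY1 M00 M01 M10 M11 ρ0 ρ1 ∈ Set.Icc 0 1 := by
  rw [accuseY1, mul_comm M01, mul_comm M00]
  exact ⟨div_nonneg hc hΔ.le, div_le_one_of_le₀ hc' hΔ.le⟩

end Formulas

end OptOut

end

open OptOut

theorem optout_interior_BNE_exists_general
    (D0 D1 M00 M01 M10 M11 ρ0 ρ1 : ℝ)
    (hD1 : 0 < D1)
    (h00 : 0 < M00) (h01 : 0 < M01) (h10 : 0 < M10) (h11 : 0 < M11)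
    (hopt0 : D0 * M00 < D1 * M01) (hopt1 : D1 * M11 < D0 * M10)
    (hc1 : 0 ≤ ρ1 * M10 - ρ0 * M11)
    (hc1' : ρ1 * M10 - ρ0 * M11 ≤ M01 * M10 - M00 * M11)
    (hc2 : 0 ≤ ρ0 * M01 - ρ1 * M00)
    (hc2' : ρ0 * M01 - ρ1 * M00 ≤ M01 * M10 - M00 * M11) :
    OptOutBNE D0 D1 M00 M01 M10 M11 ρ0 ρ1
      (D1 * M01 * (D0 * M10 - D1 * M11) / (D0 * D1 * (M01 * M10 - M00 * M11)))
      (D0 * M10 * (D1 * M01 - D0 * M00) / (D0 * D1 * (M01 * M10 - M00 * M11)))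
      ((M10 * ρ1 - M11 * ρ0) / (M01 * M10 - M00 * M11)) 0 0
      ((M01 * ρ0 - M00 * ρ1) / (M01 * M10 - M00 * M11)) ∧
    0 < D1 * M01 * (D0 * M10 - D1 * M11) / (D0 * D1 * (M01 * M10 - M00 * M11)) ∧
    D1 * M01 * (D0 * M10 - D1 * M11) / (D0 * D1 * (M01 * M10 - M00 * M11)) < 1 ∧
    0 < D0 * M10 * (D1 * M01 - D0 * M00) / (D0 * D1 * (M01 * M10 - M00 * M11)) ∧
    D0 * M10 * (D1 * M01 - D0 * M00) / (D0 * D1 * (M01 * M10 - M00 * M11)) < 1 := by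
  have hD0 : 0 < D0 := pos_of_mul_pos_left ((mul_pos hD1 h11).trans hopt1) h10.le
  have hΔ := det_pos hD0 hD1 h00.le h11.le hopt0 hopt1
  have hp := truthP_mem_Ioo hD0 hD1 h00 h01 h11 hopt0 hopt1
  have hq := truthQ_mem_Ioo hD0 hD1 h00 h10 h11 hopt0 hopt1
  have hBNE : OptOutBNE D0 D1 M00 M01 M10 M11 ρ0 ρ1 (truthP D0 D1 M00 M01 M10 M11)
      (truthQ D0 D1 M00 M01 M10 M11) (accuseX0 M00 M01 M10 M11 ρ0 ρ1) 0 0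
      (accuseY1 M00 M01 M10 M11 ρ0 ρ1) := by
    refine optOutBNE_of_indifferent (Set.Ioo_subset_Icc_self hp) (Set.Ioo_subset_Icc_self hq)
      (accuseX0_mem_Icc hΔ hc1 hc1') (accuseY1_mem_Icc hΔ hc2 hc2')
      (coeff_x0_eq_zero hD0.ne' hD1.ne' hΔ.ne') ?_ ?_ (coeff_y1_eq_zero hD0.ne' hD1.ne' hΔ.ne')
      (sub_accuseX0_mul hΔ.ne') (sub_accuseY1_mul hΔ.ne')
    · rw [coeff_x1_eq hD0.ne' hD1.ne' hΔ.ne']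
      linarith
    · rw [coeff_y0_eq hD0.ne' hD1.ne' hΔ.ne']
      linarith
  exact ⟨hBNE, hp.1, hp.2, hq.1, hq.2⟩

/-- Under the (non-strict) interior feasibility condition, the explicitly given
strategy profile is a Bayesian Nash equilibrium of the opt-out coupon game, and
B's strategy is strictly mixed. -/
theorem optout_interior_BNE_exists
    (D0 D1 M00 M01 M10 M11 ρ0 ρ1 : ℝ)
    (hD1 : 0 < D1) (hD : D1 ≤ D0) (hsum : D0 + D1 = 1)
    (h00 : 0 < M00) (h01 : 0 < M01) (h10 : 0 < M10) (h11 : 0 < M11)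
    (hopt0 : D0 * M00 < D1 * M01) (hopt1 : D1 * M11 < D0 * M10)
    (hρ0 : 0 < ρ0) (hρ1 : 0 < ρ1)
    (hc1 : 0 ≤ ρ1 * M10 - ρ0 * M11)
    (hc1' : ρ1 * M10 - ρ0 * M11 ≤ M01 * M10 - M00 * M11)
    (hc2 : 0 ≤ ρ0 * M01 - ρ1 * M00)
    (hc2' : ρ0 * M01 - ρ1 * M00 ≤ M01 * M10 - M00 * M11) :
    OptOutBNE D0 D1 M00 M01 M10 M11 ρ0 ρ1
      (D1 * M01 * (D0 * M10 - D1 * M11) / (D0 * D1 * (M01 * M10 - M00 * M11)))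
      (D0 * M10 * (D1 * M01 - D0 * M00) / (D0 * D1 * (M01 * M10 - M00 * M11)))
      ((M10 * ρ1 - M11 * ρ0) / (M01 * M10 - M00 * M11)) 0 0
      ((M01 * ρ0 - M00 * ρ1) / (M01 * M10 - M00 * M11)) ∧
    0 < D1 * M01 * (D0 * M10 - D1 * M11) / (D0 * D1 * (M01 * M10 - M00 * M11)) ∧
    D1 * M01 * (D0 * M10 - D1 * M11) / (D0 * D1 * (M01 * M10 - M00 * M11)) < 1 ∧
    0 < D0 * M10 * (D1 * M01 - D0 * M00) / (D0 * D1 * (M01 * M10 - M00 * M11)) ∧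
    D0 * M10 * (D1 * M01 - D0 * M00) / (D0 * D1 * (M01 * M10 - M00 * M11)) < 1 :=
  optout_interior_BNE_exists_general D0 D1 M00 M01 M10 M11 ρ0 ρ1 hD1 h00 h01 h10 h11 hopt0 hopt1 hc1
    hc1' hc2 hc2'
end

section
/- Let M00, M01, M10, M11 > 0 with M00·M11 < M01·M10, and let ρ0, ρ1 > 0. Then there exist x0, x1 ∈ [0,1] satisfying both ρ0 ≤ x0·M00 − x1·M10 and ρ1 ≥ x0·M01 − x1·M11 if and only if ρ0 ≤ M00 and ρ0·M01 ≤ ρ1·M00. -/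
/-!
Necessity: since `x₁ M₁₀ ≥ 0` and `x₀ ≤ 1`, the first constraint gives `ρ₀ ≤ M₀₀`; weighting the
two constraints by `M₀₁` and `M₀₀` eliminates `x₀` and leaves
`ρ₀ M₀₁ ≤ ρ₁ M₀₀ + x₁ (M₀₀ M₁₁ - M₀₁ M₁₀) ≤ ρ₁ M₀₀`.
Sufficiency: never accuse type 1 (`x₁ = 0`) and accuse type 0 with probability `x₀ = ρ₀ / M₀₀`,
which makes the first constraint tight.
-/

namespace OptOutCoupon

variable {M00 M01 M10 M11 ρ0 ρ1 x0 x1 : ℝ}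

lemma le_of_le_mul_sub_mul (h00 : 0 ≤ M00) (h10 : 0 ≤ M10) (hx0 : x0 ≤ 1) (hx1 : 0 ≤ x1)
    (h : ρ0 ≤ x0 * M00 - x1 * M10) : ρ0 ≤ M00 := by
  nlinarith [mul_nonneg hx1 h10]

lemma mul_le_mul_add_mul_det (h00 : 0 ≤ M00) (h01 : 0 ≤ M01)
    (h0 : ρ0 ≤ x0 * M00 - x1 * M10) (h1 : x0 * M01 - x1 * M11 ≤ ρ1) :
    ρ0 * M01 ≤ ρ1 * M00 + x1 * (M00 * M11 - M01 * M10) := by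
  nlinarith [mul_le_mul_of_nonneg_right h0 h01, mul_le_mul_of_nonneg_right h1 h00]

lemma mul_le_mul_of_det_nonpos (h00 : 0 ≤ M00) (h01 : 0 ≤ M01)
    (hΔ : M00 * M11 ≤ M01 * M10) (hx1 : 0 ≤ x1)
    (h0 : ρ0 ≤ x0 * M00 - x1 * M10) (h1 : x0 * M01 - x1 * M11 ≤ ρ1) :
    ρ0 * M01 ≤ ρ1 * M00 := by
  have hdet : x1 * (M00 * M11 - M01 * M10) ≤ 0 :=
    mul_nonpos_of_nonneg_of_nonpos hx1 (sub_nonpos.mpr hΔ)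
  linarith [mul_le_mul_add_mul_det h00 h01 h0 h1]

lemma exists_accusation_of_le (h00 : 0 < M00) (hρ0 : 0 ≤ ρ0) (hle : ρ0 ≤ M00)
    (hρ : ρ0 * M01 ≤ ρ1 * M00) :
    ∃ x0 ∈ Set.Icc (0:ℝ) 1, ∃ x1 ∈ Set.Icc (0:ℝ) 1,
      ρ0 ≤ x0 * M00 - x1 * M10 ∧ x0 * M01 - x1 * M11 ≤ ρ1 := by
  refine ⟨ρ0 / M00, ⟨by positivity, (div_le_one h00).mpr hle⟩, 0, ⟨le_rfl, zero_le_one⟩, ?_, ?_⟩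
  · rw [zero_mul, sub_zero, div_mul_cancel₀ _ h00.ne']
  · rw [zero_mul, sub_zero, div_mul_eq_mul_div, div_le_iff₀ h00]
    exact hρ

end OptOutCoupon

theorem optout_P1_feasibility_general (M00 M01 M10 M11 ρ0 ρ1 : ℝ)
    (h00 : 0 < M00) (h01 : 0 < M01) (h10 : 0 < M10)
    (hΔ : M00 * M11 < M01 * M10) (hρ0 : 0 < ρ0) :
    (∃ x0 ∈ Set.Icc (0:ℝ) 1, ∃ x1 ∈ Set.Icc (0:ℝ) 1,
        ρ0 ≤ x0 * M00 - x1 * M10 ∧ x0 * M01 - x1 * M11 ≤ ρ1) ↔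
      (ρ0 ≤ M00 ∧ ρ0 * M01 ≤ ρ1 * M00) := by
  constructor
  · rintro ⟨x0, ⟨-, hx0⟩, x1, ⟨hx1, -⟩, h0, h1⟩
    exact ⟨OptOutCoupon.le_of_le_mul_sub_mul h00.le h10.le hx0 hx1 h0,
      OptOutCoupon.mul_le_mul_of_det_nonpos h00.le h01.le hΔ.le hx1 h0 h1⟩
  · rintro ⟨hle, hρ⟩
    exact OptOutCoupon.exists_accusation_of_le h00 hρ0.le hle hρ

/-- Characterization of when A can commit to accusation probabilities
`(x0, x1)` after signal 0 supporting the equilibrium in which B always sends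
signal 1: such `x0, x1 ∈ [0,1]` with `ρ0 ≤ x0·M00 − x1·M10` and
`ρ1 ≥ x0·M01 − x1·M11` exist iff `ρ0 ≤ M00` and `ρ0·M01 ≤ ρ1·M00`. -/
theorem optout_P1_feasibility (M00 M01 M10 M11 ρ0 ρ1 : ℝ)
    (h00 : 0 < M00) (h01 : 0 < M01) (h10 : 0 < M10) (h11 : 0 < M11)
    (hΔ : M00 * M11 < M01 * M10) (hρ0 : 0 < ρ0) (hρ1 : 0 < ρ1) :
    (∃ x0 ∈ Set.Icc (0:ℝ) 1, ∃ x1 ∈ Set.Icc (0:ℝ) 1,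
        ρ0 ≤ x0 * M00 - x1 * M10 ∧ x0 * M01 - x1 * M11 ≤ ρ1) ↔
      (ρ0 ≤ M00 ∧ ρ0 * M01 ≤ ρ1 * M00) :=
  optout_P1_feasibility_general M00 M01 M10 M11 ρ0 ρ1 h00 h01 h10 hΔ hρ0
end

section
/- Let M00, M01, M10, M11 > 0 with M00·M11 < M01·M10, let Δ := M01·M10 − M00·M11, and let ρ0, ρ1 > 0. Then at least one of the following six conditions holds: (1) ρ0 ≥ M00 + M10 and ρ1 ≥ M01 + M11; (2) ρ0 ≤ M00 and ρ0·M01 ≤ ρ1·M00; (3) ρ1 ≤ M11 and ρ0·M11 ≥ ρ1·M10; (4) M00 ≤ ρ0 ≤ M00 + M10 and ρ1·M10 − ρ0·M11 ≥ Δ; (5) M11 ≤ ρ1 ≤ M11 + M01 and ρ0·M01 − ρ1·M00 ≥ Δ; (6) 0 ≤ ρ1·M10 − ρ0·M11 ≤ Δ and 0 ≤ ρ0·M01 − ρ1·M00 ≤ Δ. -/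
/-!
Write `Δ = M01 M10 - M00 M11 > 0`, `A = ρ1 M10 - ρ0 M11` and `B = ρ0 M01 - ρ1 M00`. Then
`ρ0 Δ = M00 A + M10 B` and `ρ1 Δ = M01 A + M11 B`, so
`(ρ0, ρ1) = a (M00, M01) + b (M10, M11)` in the coordinates `(a, b) = (A, B) / Δ`, and
condition (6) is the unit square `0 ≤ a, b ≤ 1`. Below it or to its right (`b ≤ 0` or `1 ≤ a`),
comparing `ρ0` with `M00` and `M00 + M10` selects one of the conditions (2), (4), (1). The region
left of or above the square is the mirror image under exchanging the two types, covered by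
(3), (5), (1).
-/

theorem optout_cover_one_two_four {M00 M01 M10 M11 ρ0 ρ1 : ℝ}
    (h00 : 0 < M00) (h10 : 0 < M10) (h11 : 0 ≤ M11) (hΔ : M00 * M11 < M01 * M10)
    (h : ρ0 * M01 - ρ1 * M00 ≤ 0 ∨ M01 * M10 - M00 * M11 ≤ ρ1 * M10 - ρ0 * M11) :
    (M00 + M10 ≤ ρ0 ∧ M01 + M11 ≤ ρ1) ∨ (ρ0 ≤ M00 ∧ ρ0 * M01 ≤ ρ1 * M00) ∨
      (M00 ≤ ρ0 ∧ ρ0 ≤ M00 + M10 ∧ M01 * M10 - M00 * M11 ≤ ρ1 * M10 - ρ0 * M11) := by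
  have hρ0 : ρ0 * (M01 * M10 - M00 * M11) =
      M00 * (ρ1 * M10 - ρ0 * M11) + M10 * (ρ0 * M01 - ρ1 * M00) := by ring
  have hρ1 : ρ1 * (M01 * M10 - M00 * M11) =
      M01 * (ρ1 * M10 - ρ0 * M11) + M11 * (ρ0 * M01 - ρ1 * M00) := by ring
  set Δ := M01 * M10 - M00 * M11 with hΔdef
  set A := ρ1 * M10 - ρ0 * M11
  set B := ρ0 * M01 - ρ1 * M00
  have hΔpos : 0 < Δ := sub_pos.2 hΔ
  have hB : ρ0 ≤ M00 → B ≤ 0 := by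
    intro hle
    rcases h with hB0 | hAΔ
    · exact hB0
    · nlinarith
  have hA : M00 ≤ ρ0 → Δ ≤ A := by
    intro hge
    rcases h with hB0 | hAΔ
    · nlinarith
    · exact hAΔ
  rcases le_total ρ0 M00 with hle | hge
  · exact Or.inr (Or.inl ⟨hle, sub_nonpos.1 (hB hle)⟩)
  rcases le_total ρ0 (M00 + M10) with hle | hge'
  · exact Or.inr (Or.inr ⟨hge, hle, hA hge⟩)
  refine Or.inl ⟨hge', ?_⟩
  have hsum : 0 ≤ M00 * (A - Δ) + M10 * (B - Δ) := by
    nlinarith [mul_nonneg (sub_nonneg.2 hge') hΔpos.le]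
  have key : M10 * Δ * (ρ1 - (M01 + M11)) =
      Δ * (A - Δ) + M11 * (M00 * (A - Δ) + M10 * (B - Δ)) := by
    linear_combination M10 * hρ1 + (Δ - A) * hΔdef
  have hnonneg : 0 ≤ M10 * Δ * (ρ1 - (M01 + M11)) :=
    key ▸ add_nonneg (mul_nonneg hΔpos.le (sub_nonneg.2 (hA hge))) (mul_nonneg h11 hsum)
  exact sub_nonneg.1 ((mul_nonneg_iff_of_pos_left (mul_pos h10 hΔpos)).1 hnonneg)

theorem optout_cover_one_three_five {M00 M01 M10 M11 ρ0 ρ1 : ℝ}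
    (h00 : 0 ≤ M00) (h01 : 0 < M01) (h11 : 0 < M11) (hΔ : M00 * M11 < M01 * M10)
    (h : ρ1 * M10 - ρ0 * M11 ≤ 0 ∨ M01 * M10 - M00 * M11 ≤ ρ0 * M01 - ρ1 * M00) :
    (M00 + M10 ≤ ρ0 ∧ M01 + M11 ≤ ρ1) ∨ (ρ1 ≤ M11 ∧ ρ1 * M10 ≤ ρ0 * M11) ∨
      (M11 ≤ ρ1 ∧ ρ1 ≤ M11 + M01 ∧ M01 * M10 - M00 * M11 ≤ ρ0 * M01 - ρ1 * M00) := by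
  have hΔ' : M11 * M00 < M10 * M01 := by linarith [mul_comm M11 M00, mul_comm M10 M01]
  rw [show M01 * M10 - M00 * M11 = M10 * M01 - M11 * M00 by ring] at h ⊢
  rcases optout_cover_one_two_four h11 h01 h00 hΔ' h with ⟨h1, h1'⟩ | h3 | h5
  · exact Or.inl ⟨by linarith, by linarith⟩
  · exact Or.inr (Or.inl h3)
  · exact Or.inr (Or.inr h5)

theorem optout_conditions_cover_general (M00 M01 M10 M11 ρ0 ρ1 : ℝ)
    (h00 : 0 < M00) (h01 : 0 < M01) (h10 : 0 < M10) (h11 : 0 < M11)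
    (hΔ : M00 * M11 < M01 * M10) :
    (M00 + M10 ≤ ρ0 ∧ M01 + M11 ≤ ρ1) ∨
    (ρ0 ≤ M00 ∧ ρ0 * M01 ≤ ρ1 * M00) ∨
    (ρ1 ≤ M11 ∧ ρ1 * M10 ≤ ρ0 * M11) ∨
    (M00 ≤ ρ0 ∧ ρ0 ≤ M00 + M10 ∧ M01 * M10 - M00 * M11 ≤ ρ1 * M10 - ρ0 * M11) ∨
    (M11 ≤ ρ1 ∧ ρ1 ≤ M11 + M01 ∧ M01 * M10 - M00 * M11 ≤ ρ0 * M01 - ρ1 * M00) ∨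
    (0 ≤ ρ1 * M10 - ρ0 * M11 ∧ ρ1 * M10 - ρ0 * M11 ≤ M01 * M10 - M00 * M11 ∧
      0 ≤ ρ0 * M01 - ρ1 * M00 ∧ ρ0 * M01 - ρ1 * M00 ≤ M01 * M10 - M00 * M11) := by
  by_cases h124 : ρ0 * M01 - ρ1 * M00 ≤ 0 ∨ M01 * M10 - M00 * M11 ≤ ρ1 * M10 - ρ0 * M11
  · rcases optout_cover_one_two_four h00 h10 h11.le hΔ h124 with h1 | h2 | h4
    · exact Or.inl h1
    · exact Or.inr (Or.inl h2)
    · exact Or.inr (Or.inr (Or.inr (Or.inl h4)))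
  by_cases h135 : ρ1 * M10 - ρ0 * M11 ≤ 0 ∨ M01 * M10 - M00 * M11 ≤ ρ0 * M01 - ρ1 * M00
  · rcases optout_cover_one_three_five h00.le h01 h11 hΔ h135 with h1 | h3 | h5
    · exact Or.inl h1
    · exact Or.inr (Or.inr (Or.inl h3))
    · exact Or.inr (Or.inr (Or.inr (Or.inr (Or.inl h5))))
  push Not at h124 h135
  exact Or.inr (Or.inr (Or.inr (Or.inr (Or.inr
    ⟨h135.1.le, h124.2.le, h124.1.le, h135.2.le⟩))))

/-- Every choice of the opt-out coupon game's parameters satisfies at least one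
of the six feasibility conditions for the six possible Bayesian Nash
equilibria. -/
theorem optout_conditions_cover (M00 M01 M10 M11 ρ0 ρ1 : ℝ)
    (h00 : 0 < M00) (h01 : 0 < M01) (h10 : 0 < M10) (h11 : 0 < M11)
    (hΔ : M00 * M11 < M01 * M10) (hρ0 : 0 < ρ0) (hρ1 : 0 < ρ1) :
    (M00 + M10 ≤ ρ0 ∧ M01 + M11 ≤ ρ1) ∨
    (ρ0 ≤ M00 ∧ ρ0 * M01 ≤ ρ1 * M00) ∨
    (ρ1 ≤ M11 ∧ ρ1 * M10 ≤ ρ0 * M11) ∨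
    (M00 ≤ ρ0 ∧ ρ0 ≤ M00 + M10 ∧ M01 * M10 - M00 * M11 ≤ ρ1 * M10 - ρ0 * M11) ∨
    (M11 ≤ ρ1 ∧ ρ1 ≤ M11 + M01 ∧ M01 * M10 - M00 * M11 ≤ ρ0 * M01 - ρ1 * M00) ∨
    (0 ≤ ρ1 * M10 - ρ0 * M11 ∧ ρ1 * M10 - ρ0 * M11 ≤ M01 * M10 - M00 * M11 ∧
      0 ≤ ρ0 * M01 - ρ1 * M00 ∧ ρ0 * M01 - ρ1 * M00 ≤ M01 * M10 - M00 * M11) :=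
  optout_conditions_cover_general M00 M01 M10 M11 ρ0 ρ1 h00 h01 h10 h11 hΔ
end
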